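/- arXiv:2407.20939 — 4 statements merged into one kernel-verified Lean document; each statement's English description precedes it below -/
import Mathlib

section
/- Let U ⊆ ℝ³ be open and φ ∈ C^∞(U). Let g^{αβ} = g^{βα} be smooth functions of q ∈ ℝ³ with g^{00}(q) ≡ −1 such that the matrix (g^{αβ}(∂φ)) is invertible at every point of U, with inverse matrix (g_{αβ}). Let u ∈ C^∞(U) satisfy the eikonal equation ∑_{α,β=0}^{2} g^{αβ}(∂φ) ∂_α u ∂_β u = 0 on U, with ∑_α g^{α0}(∂φ) ∂_α u ≠ 0 on U. Then the inverse foliation density μ satisfies the transport equation L̊μ = −½ μ G^γ_{L̊L̊} L̊φ_γ − μ G^γ_{T̃L̊} L̊φ_γ + ½ G^γ_{L̊L̊} Tφ_γ (summation over γ = 0,1,2) at every point of U. -/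
noncomputable section

open Real Set MeasureTheory

/-- Spacetime points `(x⁰, x¹, x²) ∈ ℝ³`. -/
abbrev Pt : Type := Fin 3 → ℝ

/-- Partial derivative `∂_α` in the `α`-th coordinate direction. -/
def pd (α : Fin 3) (f : Pt → ℝ) : Pt → ℝ :=
  fun x => fderiv ℝ f x (Pi.single α 1)

/-- Iterated partial derivatives `∂^κ` along a list of coordinate directions. -/
def pdI : List (Fin 3) → (Pt → ℝ) → (Pt → ℝ)
  | [], f => f
  | α :: κ, f => pd α (pdI κ f)

/-- Spatial radius `r = √((x¹)² + (x²)²)` of a spacetime point. -/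
def rad (x : Pt) : ℝ := Real.sqrt ((x 1) ^ 2 + (x 2) ^ 2)

/-- Radius of a spatial point `y ∈ ℝ²`. -/
def rad2 (y : Fin 2 → ℝ) : ℝ := Real.sqrt ((y 0) ^ 2 + (y 1) ^ 2)

/-- The spacetime point `(t, y¹, y²)`. -/
def mkPt (t : ℝ) (y : Fin 2 → ℝ) : Pt := Fin.cons t y

/-- The gradient `∂φ(x) = (∂₀φ, ∂₁φ, ∂₂φ)(x)`. -/
def grad (f : Pt → ℝ) (x : Pt) : Fin 3 → ℝ := fun α => pd α f x

/-- The rotation vector field `Ω = x¹∂₂ − x²∂₁`. -/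
def Omg (f : Pt → ℝ) : Pt → ℝ := fun x => x 1 * pd 2 f x - x 2 * pd 1 f x

/-- The radial derivative `∂_r = (x¹/r)∂₁ + (x²/r)∂₂`. -/
def Dr (f : Pt → ℝ) : Pt → ℝ :=
  fun x => (x 1 / rad x) * pd 1 f x + (x 2 / rad x) * pd 2 f x

/-- The outgoing null derivative `L = ∂_t + ∂_r`. -/
def Lout (f : Pt → ℝ) : Pt → ℝ := fun x => pd 0 f x + Dr f x

/-- The incoming null derivative `L̲ = ∂_t − ∂_r`. -/
def Lin (f : Pt → ℝ) : Pt → ℝ := fun x => pd 0 f x - Dr f x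

/-- The scaling field `S = t∂_t + x¹∂₁ + x²∂₂`. -/
def Sop (f : Pt → ℝ) : Pt → ℝ :=
  fun x => x 0 * pd 0 f x + x 1 * pd 1 f x + x 2 * pd 2 f x

/-- The Lorentz boosts `H_i = t∂_i + x^i∂_t`. -/
def Hop (i : Fin 3) (f : Pt → ℝ) : Pt → ℝ :=
  fun x => x 0 * pd i f x + x i * pd 0 f x

/-- The good derivatives `Z̃_i = ω_i ∂_t + ∂_i`. -/
def Ztil (i : Fin 3) (f : Pt → ℝ) : Pt → ℝ :=
  fun x => (x i / rad x) * pd 0 f x + pd i f x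

/-- The Minkowski coefficients `m^{αβ} = diag(−1,1,1)`. -/
def mink : Fin 3 → Fin 3 → ℝ :=
  fun α β => if α = β then (if α = 0 then -1 else 1) else 0

/-- The `k`-th order structure condition for the coefficients `g^{αβ}`, together with
the `k`-th null condition and the normalization `g^{00} ≡ −1`:
`g^{αβ}(q) = m^{αβ} + ∑ g^{αβ,γ₁⋯γ_k} q_{γ₁}⋯q_{γ_k} + O(|q|^{k+1})`,
the constants being symmetric in `(α,β)` and in `(γ₁,…,γ_k)`, and
`∑ g^{αβ,γ₁⋯γ_k} ξ_α ξ_β ξ_{γ₁}⋯ξ_{γ_k} = 0` whenever `ξ₀ = −1`, `ξ₁² + ξ₂² = 1`. -/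
def GoodCoeffs (k : ℕ) (g : (Fin 3 → ℝ) → Fin 3 → Fin 3 → ℝ) : Prop :=
  (∀ q α β, g q α β = g q β α) ∧
  (∀ α β, ContDiff ℝ (⊤ : ℕ∞) (fun q => g q α β)) ∧
  (∀ q, g q 0 0 = -1) ∧
  ∃ c : Fin 3 → Fin 3 → (Fin k → Fin 3) → ℝ,
    (∀ α β γ, c α β γ = c β α γ) ∧
    (∀ α β (γ : Fin k → Fin 3) (σ : Equiv.Perm (Fin k)), c α β (γ ∘ σ) = c α β γ) ∧
    (∃ C > (0:ℝ), ∃ ε > (0:ℝ), ∀ q : Fin 3 → ℝ, ‖q‖ ≤ ε → ∀ α β,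
        |g q α β - mink α β - ∑ γ : Fin k → Fin 3, c α β γ * ∏ i, q (γ i)|
          ≤ C * ‖q‖ ^ (k + 1)) ∧
    (∀ ξ : Fin 3 → ℝ, ξ 0 = -1 → (ξ 1) ^ 2 + (ξ 2) ^ 2 = 1 →
        ∑ α, ∑ β, ∑ γ : Fin k → Fin 3, c α β γ * ξ α * ξ β * ∏ i, ξ (γ i) = 0)

/-- A short pulse profile: a smooth function of `(s, ω) ∈ ℝ × ℝ²` (restricted to
`ω ∈ S¹`) with compact support in `s ∈ (−1, 0)`. -/
def PulseProfile (ψ : ℝ → (Fin 2 → ℝ) → ℝ) : Prop :=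
  ContDiff ℝ (⊤ : ℕ∞) (Function.uncurry ψ) ∧
  ∀ s ω, s ∉ Set.Ioo (-1 : ℝ) 0 → ψ s ω = 0

/-- The short pulse `δ^a ψ((r−1)/δ, ω)` as a function of the spacetime point. -/
def pulse (δ a : ℝ) (ψ : ℝ → (Fin 2 → ℝ) → ℝ) (x : Pt) : ℝ :=
  δ ^ a * ψ ((rad x - 1) / δ) (fun i => x i.succ / rad x)

/-- The first order outgoing constraint condition on the short pulse data:
`|(∂_t + ∂_r)φ(1,x)| ≤ C δ^{2−ε₀}` with `C` independent of `δ`. -/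
def OutgoingData (ε₀ : ℝ) (φ₀ φ₁ : ℝ → (Fin 2 → ℝ) → ℝ) : Prop :=
  ∃ C > (0:ℝ), ∀ δ : ℝ, 0 < δ → δ ≤ 1 → ∀ x : Pt,
    |pulse δ (1 - ε₀) φ₁ x + Dr (pulse δ (2 - ε₀) φ₀) x| ≤ C * δ ^ (2 - ε₀)

/-- The short pulse initial conditions
`φ(1,x) = δ^{2−ε₀} φ₀((r−1)/δ, ω)`, `∂_tφ(1,x) = δ^{1−ε₀} φ₁((r−1)/δ, ω)`. -/
def InitData (δ ε₀ : ℝ) (φ₀ φ₁ : ℝ → (Fin 2 → ℝ) → ℝ) (φ : Pt → ℝ) : Prop :=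
  (∀ x : Pt, x 0 = 1 → φ x = pulse δ (2 - ε₀) φ₀ x) ∧
  (∀ x : Pt, x 0 = 1 → pd 0 φ x = pulse δ (1 - ε₀) φ₁ x)

/-- Apply a word of vector fields taken from the family `V`. -/
def applyW {m : ℕ} (V : Fin m → (Pt → ℝ) → (Pt → ℝ)) :
    List (Fin m) → (Pt → ℝ) → (Pt → ℝ)
  | [], f => f
  | j :: w, f => V j (applyW V w f)

/-- The Klainerman fields `Γ̄ ∈ {S, H₁, H₂, Ω}`. -/
def KV : Fin 4 → (Pt → ℝ) → (Pt → ℝ) := ![Sop, Hop 1, Hop 2, Omg]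

/-- The fields `Γ̃ ∈ {∂₀, ∂₁, ∂₂, S, H₁, H₂}`. -/
def GV : Fin 6 → (Pt → ℝ) → (Pt → ℝ) := ![pd 0, pd 1, pd 2, Sop, Hop 1, Hop 2]

/-- The `L²` norm of a function over a spatial region. -/
def l2norm (A : Set (Fin 2 → ℝ)) (F : (Fin 2 → ℝ) → ℝ) : ℝ :=
  Real.sqrt (∫ y in A, (F y) ^ 2)

/-- `|∂f|²`, the squared length of the full spacetime gradient. -/
def gradSq (f : Pt → ℝ) (x : Pt) : ℝ := ∑ α : Fin 3, (pd α f x) ^ 2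

/-- The weighted energies `E_{p,l}(t)` inside the cone, with ghost-weighted
spacetime integral. -/
def Energy (δ t₀ : ℝ) (φ : Pt → ℝ) (p l : ℕ) (t : ℝ) : ℝ :=
  ∑ w : Fin p → Fin 6,
    ((∫ y in {y : Fin 2 → ℝ | 2 * δ ≤ t - rad2 y},
        gradSq (applyW GV (List.ofFn w) (Omg^[l] φ)) (mkPt t y)) +
      ∑ i ∈ ({1, 2} : Finset (Fin 3)),
        ∫ z in {z : Pt | t₀ ≤ z 0 ∧ z 0 ≤ t ∧ 2 * δ ≤ z 0 - rad z},
          (Ztil i (applyW GV (List.ofFn w) (Omg^[l] φ)) z) ^ 2 /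
            (1 + (z 0 - rad z) ^ ((3 : ℝ) / 2)))

/-- The bootstrap exponents for the energies `E_{p,l}`. -/
def expo (ε₀ : ℝ) : ℕ → ℝ
  | 0 => 4 - 2 * ε₀
  | 1 => 17 / 6 - 2 * ε₀
  | 2 => 1 - 2 * ε₀
  | 3 => -1 - 2 * ε₀
  | _ => -3 - 2 * ε₀

/-- The coefficient matrix `(g^{αβ}(q))`. -/
def gmat (g : (Fin 3 → ℝ) → Fin 3 → Fin 3 → ℝ) (q : Fin 3 → ℝ) :
    Matrix (Fin 3) (Fin 3) ℝ := Matrix.of fun α β => g q α β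

/-- The inverse matrix `(g_{αβ}(q))` of `(g^{αβ}(q))`. -/
def glow (g : (Fin 3 → ℝ) → Fin 3 → Fin 3 → ℝ) (q : Fin 3 → ℝ) :
    Matrix (Fin 3) (Fin 3) ℝ := (gmat g q)⁻¹

/-- `G^γ_{αβ} = (∂ g_{αβ}/∂q_γ)(∂φ)`. -/
def Gc (g : (Fin 3 → ℝ) → Fin 3 → Fin 3 → ℝ) (φ : Pt → ℝ) (γ α β : Fin 3) (x : Pt) : ℝ :=
  fderiv ℝ (fun q => glow g q α β) (grad φ x) (Pi.single γ 1)

/-- `(∂ g^{αβ}/∂q_ν)(∂φ)`. -/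
def dgUp (g : (Fin 3 → ℝ) → Fin 3 → Fin 3 → ℝ) (φ : Pt → ℝ) (ν α β : Fin 3) (x : Pt) : ℝ :=
  fderiv ℝ (fun q => g q α β) (grad φ x) (Pi.single ν 1)

/-- The action of a vector field (given by its components) on a function. -/
def vfd (V : Pt → Fin 3 → ℝ) (f : Pt → ℝ) (x : Pt) : ℝ := ∑ β, V x β * pd β f x

/-- The inverse foliation density `μ = −(∑ g^{α0}(∂φ) ∂_α u)⁻¹`. -/
def muf (g : (Fin 3 → ℝ) → Fin 3 → Fin 3 → ℝ) (φ u : Pt → ℝ) (x : Pt) : ℝ :=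
  -(∑ α, g (grad φ x) α 0 * pd α u x)⁻¹

/-- The components of `L̊`: `L̊^β = −μ ∑_α g^{αβ}(∂φ) ∂_α u`. -/
def Lvec (g : (Fin 3 → ℝ) → Fin 3 → Fin 3 → ℝ) (φ u : Pt → ℝ) (x : Pt) : Fin 3 → ℝ :=
  fun β => -(muf g φ u x) * ∑ α, g (grad φ x) α β * pd α u x

/-- The components of `T̃`: `T̃^β = −g^{0β}(∂φ) − L̊^β`. -/
def Ttvec (g : (Fin 3 → ℝ) → Fin 3 → Fin 3 → ℝ) (φ u : Pt → ℝ) (x : Pt) : Fin 3 → ℝ :=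
  fun β => -(g (grad φ x) 0 β) - Lvec g φ u x β

/-- The components of `T = μ T̃`. -/
def Tvec (g : (Fin 3 → ℝ) → Fin 3 → Fin 3 → ℝ) (φ u : Pt → ℝ) (x : Pt) : Fin 3 → ℝ :=
  fun β => muf g φ u x * Ttvec g φ u x β

/-- `G^γ_{VW} = ∑ G^γ_{αβ} V^α W^β`. -/
def Gpair (g : (Fin 3 → ℝ) → Fin 3 → Fin 3 → ℝ) (φ : Pt → ℝ) (γ : Fin 3)
    (V W : Pt → Fin 3 → ℝ) (x : Pt) : ℝ :=
  ∑ α, ∑ β, Gc g φ γ α β x * V x α * W x β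

/-- The Christoffel symbols `Γ^γ_{αβ}` of the metric `g(∂φ)`. -/
def Gamma (g : (Fin 3 → ℝ) → Fin 3 → Fin 3 → ℝ) (φ : Pt → ℝ) (γ α β : Fin 3) (x : Pt) : ℝ :=
  (1/2) * ∑ κ, ∑ ν, g (grad φ x) γ κ *
    (Gc g φ ν κ β x * pd α (pd ν φ) x + Gc g φ ν α κ x * pd β (pd ν φ) x
      - Gc g φ ν α β x * pd κ (pd ν φ) x)

/-- The reduced covariant wave operator `□_g ψ = g^{αβ}∂²_{αβ}ψ − g^{αβ}Γ^λ_{αβ}∂_λψ`. -/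
def boxg (g : (Fin 3 → ℝ) → Fin 3 → Fin 3 → ℝ) (φ ψ : Pt → ℝ) (x : Pt) : ℝ :=
  (∑ α, ∑ β, g (grad φ x) α β * pd α (pd β ψ) x)
    - ∑ α, ∑ β, ∑ lam, g (grad φ x) α β * Gamma g φ lam α β x * pd lam ψ x

/-- Multi-index derivatives over `{∂_t, ∂_r}`: `0 ↦ ∂_t`, `1 ↦ ∂_r`. -/
def pdBar : List (Fin 2) → (Pt → ℝ) → (Pt → ℝ)
  | [], f => f
  | i :: ι, f => if i = 0 then pd 0 (pdBar ι f) else Dr (pdBar ι f)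

/-- `Q = −½(∂_tφ)² + ½|∇_xφ|²`. -/
def Qfun (φ : Pt → ℝ) (y : Pt) : ℝ :=
  -(pd 0 φ y) ^ 2 / 2 + ((pd 1 φ y) ^ 2 + (pd 2 φ y) ^ 2) / 2

/-- Alinhac's ghost weight `W = e^{2(1+t−r)^{−1/2}}`. -/
def Wgt (x : Pt) : ℝ := Real.exp (2 * (1 + x 0 - rad x) ^ (-(1:ℝ)/2))



-- ## auxiliary lemmas


lemma clm_sum_apply (L : Pt →L[ℝ] ℝ) (v : Pt) : L v = ∑ γ, v γ * L (Pi.single γ 1) := by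
  conv_lhs => rw [← Finset.univ_sum_single v]
  rw [map_sum]
  refine Finset.sum_congr rfl fun γ _ => ?_
  have h : (v γ • (Pi.single γ (1:ℝ) : Pt) : Pt) = (Pi.single γ (v γ) : Pt) := by
    rw [← Pi.single_smul, smul_eq_mul, mul_one]
  rw [← h, _root_.map_smul, smul_eq_mul]

section
variable {f h : Pt → ℝ} {x : Pt} {β : Fin 3}

lemma pd_congr {g : Pt → ℝ} (hfg : f =ᶠ[nhds x] g) : pd β f x = pd β g x := by
  unfold pd; rw [hfg.fderiv_eq]

lemma pd_sumF {ι : Type*} (s : Finset ι) (F : ι → Pt → ℝ)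
    (hF : ∀ i ∈ s, DifferentiableAt ℝ (F i) x) :
    pd β (fun y => ∑ i ∈ s, F i y) x = ∑ i ∈ s, pd β (F i) x := by
  unfold pd; rw [fderiv_fun_sum hF, ContinuousLinearMap.sum_apply]

lemma pd_mulF (hf : DifferentiableAt ℝ f x) (hh : DifferentiableAt ℝ h x) :
    pd β (fun y => f y * h y) x = pd β f x * h x + f x * pd β h x := by
  unfold pd; rw [fderiv_fun_mul hf hh]
  simp only [ContinuousLinearMap.add_apply, ContinuousLinearMap.smul_apply, smul_eq_mul]
  ring

lemma pd_negF : pd β (fun y => -f y) x = -pd β f x := by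
  unfold pd; rw [fderiv_fun_neg]; simp

lemma pd_invF (hf : DifferentiableAt ℝ f x) (h0 : f x ≠ 0) :
    pd β (fun y => (f y)⁻¹) x = -(f x ^ 2)⁻¹ * pd β f x := by
  unfold pd
  rw [show (fun y => (f y)⁻¹) = (fun t : ℝ => t⁻¹) ∘ f from rfl,
    fderiv_comp x (differentiableAt_inv h0) hf]
  rw [ContinuousLinearMap.comp_apply, fderiv_inv]
  simp only [ContinuousLinearMap.smulRight_apply, ContinuousLinearMap.one_apply, smul_eq_mul,
    ContinuousLinearMap.toSpanSingleton_apply]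
  ring

lemma contDiffAt_pd (hf : ContDiffAt ℝ (⊤:ℕ∞) f x) (α : Fin 3) :
    ContDiffAt ℝ (⊤:ℕ∞) (pd α f) x := by
  have h1 : ContDiffAt ℝ (⊤:ℕ∞) (fderiv ℝ f) x := by
    apply hf.fderiv_right
    exact_mod_cast le_top
  exact h1.clm_apply contDiffAt_const

lemma diffAt_pd (hf : ContDiffAt ℝ (⊤:ℕ∞) f x) (α : Fin 3) :
    DifferentiableAt ℝ (pd α f) x :=
  (contDiffAt_pd hf α).differentiableAt (by simp)

lemma diffAt_grad (hf : ContDiffAt ℝ (⊤:ℕ∞) f x) : DifferentiableAt ℝ (grad f) x := by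
  rw [show grad f = fun y γ => pd γ f y from rfl]
  exact differentiableAt_pi.mpr fun γ => diffAt_pd hf γ

lemma grad_fderiv_apply (hf : ContDiffAt ℝ (⊤:ℕ∞) f x) :
    fderiv ℝ (grad f) x (Pi.single β 1) = fun γ => pd β (pd γ f) x := by
  rw [show grad f = fun y γ => pd γ f y from rfl, fderiv_pi fun γ => diffAt_pd hf γ]
  rfl

lemma pd_comp_grad (F : (Fin 3 → ℝ) → ℝ) (hF : ContDiff ℝ (⊤:ℕ∞) F)
    (hfx : ContDiffAt ℝ (⊤:ℕ∞) f x) :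
    pd β (fun y => F (grad f y)) x
      = ∑ γ, fderiv ℝ F (grad f x) (Pi.single γ 1) * pd β (pd γ f) x := by
  have hgrad : DifferentiableAt ℝ (grad f) x := diffAt_grad hfx
  have hFd : DifferentiableAt ℝ F (grad f x) :=
    (hF.differentiable (by simp)).differentiableAt
  have h1 : pd β (fun y => F (grad f y)) x
      = fderiv ℝ F (grad f x) (fderiv ℝ (grad f) x (Pi.single β 1)) := by
    unfold pd
    rw [show (fun y => F (grad f y)) = F ∘ grad f from rfl, fderiv_comp x hFd hgrad]
    rfl
  rw [h1, grad_fderiv_apply hfx, clm_sum_apply]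
  exact Finset.sum_congr rfl fun γ _ => mul_comm _ _

lemma pd_pd_symm (hf : ContDiffAt ℝ (⊤:ℕ∞) f x) (α : Fin 3) :
    pd β (pd α f) x = pd α (pd β f) x := by
  have hdiff : DifferentiableAt ℝ (fderiv ℝ f) x :=
    ((hf.fderiv_right (m := (⊤:ℕ∞)) (by exact_mod_cast le_top)).differentiableAt
      (by simp))
  have key : ∀ (δ : Fin 3) (v : Pt), pd δ (fun y => fderiv ℝ f y v) x
      = fderiv ℝ (fderiv ℝ f) x (Pi.single δ 1) v := by
    intro δ v
    unfold pd
    rw [fderiv_clm_apply hdiff (differentiableAt_const v)]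
    simp
  have hsym := hf.isSymmSndFDerivAt (n := ((⊤:ℕ∞) : WithTop ℕ∞)) (by
      rw [show (2 : WithTop ℕ∞) = ((2:ℕ∞) : WithTop ℕ∞) from rfl]
      rw [minSmoothness_of_isRCLikeNormedField]
      exact WithTop.coe_le_coe.mpr le_top)
  have h1 : pd β (pd α f) x = fderiv ℝ (fderiv ℝ f) x (Pi.single β 1) (Pi.single α 1) :=
    key β (Pi.single α 1)
  have h2 : pd α (pd β f) x = fderiv ℝ (fderiv ℝ f) x (Pi.single α 1) (Pi.single β 1) :=
    key α (Pi.single β 1)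
  rw [h1, h2]
  exact hsym _ _

end

lemma Gc_formula (g : (Fin 3 → ℝ) → Fin 3 → Fin 3 → ℝ)
    (hgsmooth : ∀ α β, ContDiff ℝ (⊤:ℕ∞) (fun q => g q α β))
    (φ : Pt → ℝ) (x : Pt) (hdet : IsUnit (gmat g (grad φ x)).det) (γ α β : Fin 3) :
    Gc g φ γ α β x
      = -∑ κ, ∑ ν, glow g (grad φ x) α κ * dgUp g φ γ κ ν x * glow g (grad φ x) ν β := by
  have hgd : ∀ (q : Fin 3 → ℝ) (i j : Fin 3), DifferentiableAt ℝ (fun q => g q i j) q :=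
    fun q i j => ((hgsmooth i j).differentiable (by simp)).differentiableAt
  have hgc : ∀ i j : Fin 3, Continuous fun q => g q i j := fun i j => (hgsmooth i j).continuous
  have hdetfun : (fun q : Fin 3 → ℝ => (gmat g q).det)
      = fun q => g q 0 0 * g q 1 1 * g q 2 2 - g q 0 0 * g q 1 2 * g q 2 1
        - g q 0 1 * g q 1 0 * g q 2 2 + g q 0 1 * g q 1 2 * g q 2 0
        + g q 0 2 * g q 1 0 * g q 2 1 - g q 0 2 * g q 1 1 * g q 2 0 :=
    funext fun q => by rw [Matrix.det_fin_three]; rfl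
  have hdetdiff : ∀ q, DifferentiableAt ℝ (fun q : Fin 3 → ℝ => (gmat g q).det) q := by
    intro q; rw [hdetfun]; fun_prop
  have hdetcont : Continuous (fun q : Fin 3 → ℝ => (gmat g q).det) := by
    rw [hdetfun]; fun_prop
  have hglowdiff : ∀ (ν' β' : Fin 3), DifferentiableAt ℝ (fun q => glow g q ν' β') (grad φ x) := by
    intro ν' β'
    have hfun : (fun q => glow g q ν' β')
        = fun q => ((gmat g q).det)⁻¹ * (gmat g q).adjugate ν' β' := by
      funext q
      rw [glow, Matrix.inv_def, Matrix.smul_apply, Ring.inverse_eq_inv', smul_eq_mul]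
    rw [hfun]
    have h0 : (gmat g (grad φ x)).det ≠ 0 := by
      simpa [isUnit_iff_ne_zero] using hdet
    apply DifferentiableAt.mul ((hdetdiff _).inv h0)
    have hB : ∀ a b : Fin 3, DifferentiableAt ℝ
        (fun q : Fin 3 → ℝ => if a = β' then (Pi.single ν' (1:ℝ) : Fin 3 → ℝ) b else g q a b)
        (grad φ x) := by
      intro a b
      by_cases hcase : a = β'
      · simp only [hcase, if_pos rfl]; exact differentiableAt_const _
      · simp only [if_neg hcase]; exact hgd _ a b
    have e : (fun q => (gmat g q).adjugate ν' β')
        = fun q : Fin 3 → ℝ =>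
          (if (0:Fin 3) = β' then (Pi.single ν' (1:ℝ) : Fin 3 → ℝ) 0 else g q 0 0)
            * (if (1:Fin 3) = β' then (Pi.single ν' (1:ℝ) : Fin 3 → ℝ) 1 else g q 1 1)
            * (if (2:Fin 3) = β' then (Pi.single ν' (1:ℝ) : Fin 3 → ℝ) 2 else g q 2 2)
          - (if (0:Fin 3) = β' then (Pi.single ν' (1:ℝ) : Fin 3 → ℝ) 0 else g q 0 0)
            * (if (1:Fin 3) = β' then (Pi.single ν' (1:ℝ) : Fin 3 → ℝ) 2 else g q 1 2)
            * (if (2:Fin 3) = β' then (Pi.single ν' (1:ℝ) : Fin 3 → ℝ) 1 else g q 2 1)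
          - (if (0:Fin 3) = β' then (Pi.single ν' (1:ℝ) : Fin 3 → ℝ) 1 else g q 0 1)
            * (if (1:Fin 3) = β' then (Pi.single ν' (1:ℝ) : Fin 3 → ℝ) 0 else g q 1 0)
            * (if (2:Fin 3) = β' then (Pi.single ν' (1:ℝ) : Fin 3 → ℝ) 2 else g q 2 2)
          + (if (0:Fin 3) = β' then (Pi.single ν' (1:ℝ) : Fin 3 → ℝ) 1 else g q 0 1)
            * (if (1:Fin 3) = β' then (Pi.single ν' (1:ℝ) : Fin 3 → ℝ) 2 else g q 1 2)
            * (if (2:Fin 3) = β' then (Pi.single ν' (1:ℝ) : Fin 3 → ℝ) 0 else g q 2 0)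
          + (if (0:Fin 3) = β' then (Pi.single ν' (1:ℝ) : Fin 3 → ℝ) 2 else g q 0 2)
            * (if (1:Fin 3) = β' then (Pi.single ν' (1:ℝ) : Fin 3 → ℝ) 0 else g q 1 0)
            * (if (2:Fin 3) = β' then (Pi.single ν' (1:ℝ) : Fin 3 → ℝ) 1 else g q 2 1)
          - (if (0:Fin 3) = β' then (Pi.single ν' (1:ℝ) : Fin 3 → ℝ) 2 else g q 0 2)
            * (if (1:Fin 3) = β' then (Pi.single ν' (1:ℝ) : Fin 3 → ℝ) 1 else g q 1 1)
            * (if (2:Fin 3) = β' then (Pi.single ν' (1:ℝ) : Fin 3 → ℝ) 0 else g q 2 0) := by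
      funext q
      rw [Matrix.adjugate_apply, Matrix.det_fin_three]
      simp only [Matrix.updateRow_apply, gmat, Matrix.of_apply]
    rw [e]
    fun_prop
  have h0 : (gmat g (grad φ x)).det ≠ 0 := by simpa [isUnit_iff_ne_zero] using hdet
  set D : Fin 3 → ℝ :=
    fun ν => fderiv ℝ (fun q => glow g q ν β) (grad φ x) (Pi.single γ 1) with hD
  have hmulid : ∀ᶠ q in nhds (grad φ x), ∀ α' : Fin 3,
      (∑ ν, g q α' ν * glow g q ν β) = if α' = β then (1:ℝ) else 0 := by
    have hopen : {q : Fin 3 → ℝ | (gmat g q).det ≠ 0} ∈ nhds (grad φ x) := by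
      have : IsOpen {q : Fin 3 → ℝ | (gmat g q).det ≠ 0} :=
        isOpen_compl_singleton.preimage hdetcont
      exact this.mem_nhds h0
    filter_upwards [hopen] with q hq α'
    have h2 := congrFun (congrFun
      (Matrix.mul_nonsing_inv (gmat g q) (isUnit_iff_ne_zero.mpr hq)) α') β
    rw [Matrix.mul_apply] at h2
    simpa [Matrix.one_apply, gmat, Matrix.of_apply, glow] using h2
  have heq : ∀ α' : Fin 3,
      ∑ ν, (g (grad φ x) α' ν * D ν + glow g (grad φ x) ν β * dgUp g φ γ α' ν x) = 0 := by
    intro α'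
    have hev : (fun q => ∑ ν, g q α' ν * glow g q ν β)
        =ᶠ[nhds (grad φ x)] fun _ => (if α' = β then (1:ℝ) else 0) :=
      hmulid.mono fun q hq => hq α'
    have hD0 : fderiv ℝ (fun q => ∑ ν, g q α' ν * glow g q ν β) (grad φ x) = 0 := by
      rw [hev.fderiv_eq]; exact fderiv_const_apply _
    have h1 : fderiv ℝ (fun q => ∑ ν, g q α' ν * glow g q ν β) (grad φ x)
        = ∑ ν, fderiv ℝ (fun q => g q α' ν * glow g q ν β) (grad φ x) :=
      fderiv_fun_sum fun ν _ => (hgd _ α' ν).mul (hglowdiff ν β)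
    have h2 : (0:ℝ) = ∑ ν, (g (grad φ x) α' ν * D ν
        + glow g (grad φ x) ν β * dgUp g φ γ α' ν x) := by
      calc (0:ℝ) = (fderiv ℝ (fun q => ∑ ν, g q α' ν * glow g q ν β) (grad φ x))
            (Pi.single γ 1) := by rw [hD0]; rfl
        _ = ∑ ν, (fderiv ℝ (fun q => g q α' ν * glow g q ν β) (grad φ x)) (Pi.single γ 1) := by
            rw [h1, ContinuousLinearMap.sum_apply]
        _ = ∑ ν, (g (grad φ x) α' ν * D ν
            + glow g (grad φ x) ν β * dgUp g φ γ α' ν x) := by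
            refine Finset.sum_congr rfl fun ν _ => ?_
            rw [fderiv_fun_mul (hgd _ α' ν) (hglowdiff ν β)]
            simp only [ContinuousLinearMap.add_apply, ContinuousLinearMap.smul_apply,
              smul_eq_mul]
            rfl
    exact h2.symm
  have hBA' : ∀ κ ν : Fin 3, ∑ α', glow g (grad φ x) κ α' * g (grad φ x) α' ν
      = if κ = ν then (1:ℝ) else 0 := by
    intro κ ν
    have h2 := congrFun (congrFun (Matrix.nonsing_inv_mul (gmat g (grad φ x)) hdet) κ) ν
    rw [Matrix.mul_apply] at h2
    simpa [Matrix.one_apply, gmat, Matrix.of_apply, glow] using h2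
  calc Gc g φ γ α β x = D α := rfl
    _ = ∑ ν, (if α = ν then (1:ℝ) else 0) * D ν := by
        fin_cases α <;> simp [Fin.sum_univ_three]
    _ = ∑ ν, (∑ α', glow g (grad φ x) α α' * g (grad φ x) α' ν) * D ν := by
        simp only [hBA']
    _ = ∑ α', glow g (grad φ x) α α' * ∑ ν, g (grad φ x) α' ν * D ν := by
        simp only [Finset.sum_mul, Finset.mul_sum]
        rw [Finset.sum_comm]
        refine Finset.sum_congr rfl fun α' _ => Finset.sum_congr rfl fun ν _ => by ring
    _ = ∑ α', glow g (grad φ x) α α'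
        * (-∑ ν, glow g (grad φ x) ν β * dgUp g φ γ α' ν x) := by
        refine Finset.sum_congr rfl fun α' _ => ?_
        congr 1
        have h := heq α'
        rw [Finset.sum_add_distrib] at h
        linarith
    _ = -∑ κ, ∑ ν, glow g (grad φ x) α κ * dgUp g φ γ κ ν x * glow g (grad φ x) ν β := by
        simp only [Fin.sum_univ_three]; ring



private lemma key_algebra
    (μ : ℝ) (Aq B : Fin 3 → Fin 3 → ℝ) (dg : Fin 3 → Fin 3 → Fin 3 → ℝ)
    (uv : Fin 3 → ℝ) (uu2 φ2 : Fin 3 → Fin 3 → ℝ)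
    (Lv Tt : Fin 3 → ℝ) (Gcv : Fin 3 → Fin 3 → Fin 3 → ℝ) (pdμ : Fin 3 → ℝ)
    (hAB : ∀ κ ν, ∑ α, Aq κ α * B α ν = if κ = ν then 1 else 0)
    (hAsym : ∀ α β, Aq α β = Aq β α)
    (hBsym : ∀ α β, B α β = B β α)
    (hdgsym : ∀ γ α β, dg γ α β = dg γ β α)
    (huusym : ∀ α β, uu2 α β = uu2 β α)
    (heik' : ∀ ν, (∑ γ, (∑ α, ∑ β, dg γ α β * uv α * uv β) * φ2 γ ν)
        + 2 * ∑ α, ∑ β, Aq α β * uv α * uu2 ν β = 0)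
    (hLv : ∀ β, Lv β = -μ * ∑ α, Aq α β * uv α)
    (hTt : ∀ β, Tt β = -Aq 0 β - Lv β)
    (hGc : ∀ γ α β, Gcv γ α β = -∑ κ, ∑ ν, B α κ * dg γ κ ν * B ν β)
    (hpdμ : ∀ β, pdμ β = μ^2 * ((∑ α, (∑ γ, dg γ α 0 * φ2 γ β) * uv α)
        + ∑ α, Aq α 0 * uu2 β α)) :
    ∑ β, Lv β * pdμ β =
      -(1/2) * μ * (∑ γ, (∑ α, ∑ β, Gcv γ α β * Lv α * Lv β) * ∑ β, Lv β * φ2 γ β)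
        - μ * (∑ γ, (∑ α, ∑ β, Gcv γ α β * Tt α * Lv β) * ∑ β, Lv β * φ2 γ β)
        + (1/2) * (∑ γ, (∑ α, ∑ β, Gcv γ α β * Lv α * Lv β) * ∑ β, μ * Tt β * φ2 γ β) := by
  have hB10 : B 1 0 = B 0 1 := hBsym 1 0
  have hB20 : B 2 0 = B 0 2 := hBsym 2 0
  have hB21 : B 2 1 = B 1 2 := hBsym 2 1
  -- step 1 : contraction of B with Lv
  have step1 : ∀ κ, ∑ α, B α κ * Lv α = -μ * uv κ := by
    intro κ
    have e1 : ∑ α, B α κ * Lv α = -μ * ∑ ρ, (∑ α, Aq ρ α * B α κ) * uv ρ := by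
      simp only [hLv, Fin.sum_univ_three]; ring
    rw [e1]
    simp only [hAB]
    fin_cases κ <;> simp [Fin.sum_univ_three]
  -- step 2 : contraction of B with Tt
  have step2 : ∀ κ, ∑ α, B α κ * Tt α
      = -(if (0:Fin 3) = κ then (1:ℝ) else 0) + μ * uv κ := by
    intro κ
    have e1 : ∑ α, B α κ * Tt α = -(∑ α, Aq 0 α * B α κ) - ∑ α, B α κ * Lv α := by
      simp only [hTt, Fin.sum_univ_three]; ring
    rw [e1, hAB 0 κ, step1 κ]; ring
  -- step 3 : G_{LL}
  have step3 : ∀ γ, (∑ α, ∑ β, Gcv γ α β * Lv α * Lv β)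
      = -(μ^2) * ∑ α, ∑ β, dg γ α β * uv α * uv β := by
    intro γ
    have e1 : (∑ α, ∑ β, Gcv γ α β * Lv α * Lv β)
        = -∑ κ, ∑ ν, dg γ κ ν * (∑ α, B α κ * Lv α) * (∑ α, B α ν * Lv α) := by
      simp only [hGc, hB10, hB20, hB21, Fin.sum_univ_three]; ring
    rw [e1]; simp only [step1, Fin.sum_univ_three]; ring
  -- step 4 : G_{T̃L}
  have step4 : ∀ γ, (∑ α, ∑ β, Gcv γ α β * Tt α * Lv β)
      = μ^2 * (∑ α, ∑ β, dg γ α β * uv α * uv β) - μ * ∑ α, dg γ α 0 * uv α := by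
    intro γ
    have e1 : (∑ α, ∑ β, Gcv γ α β * Tt α * Lv β)
        = -∑ κ, ∑ ν, dg γ κ ν * (∑ α, B α κ * Tt α) * (∑ α, B α ν * Lv α) := by
      simp only [hGc, hB10, hB20, hB21, Fin.sum_univ_three]; ring
    rw [e1]
    simp only [step1, step2]
    have hd01 : dg γ 0 1 = dg γ 1 0 := hdgsym γ 0 1
    have hd02 : dg γ 0 2 = dg γ 2 0 := hdgsym γ 0 2
    have h01 : (if (0:Fin 3) = 1 then (1:ℝ) else 0) = 0 := if_neg (by decide)
    have h02 : (if (0:Fin 3) = 2 then (1:ℝ) else 0) = 0 := if_neg (by decide)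
    simp only [Fin.sum_univ_three, hd01, hd02, h01, h02, eq_self_iff_true, if_true]
    ring
  -- step 5 : contraction of Lv with second derivatives of u
  have step5 : ∀ ν, ∑ α, Lv α * uu2 ν α
      = (μ/2) * ∑ γ, (∑ α, ∑ β, dg γ α β * uv α * uv β) * φ2 γ ν := by
    intro ν
    have e1 : ∑ α, Lv α * uu2 ν α = -μ * ∑ α, ∑ β, Aq α β * uv α * uu2 ν β := by
      simp only [hLv, Fin.sum_univ_three]; ring
    rw [e1]
    linear_combination (-μ/2) * heik' ν
  have key1 : ∀ ν, ∑ β, Lv β * uu2 β ν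
      = (μ/2) * ∑ γ, (∑ α, ∑ β, dg γ α β * uv α * uv β) * φ2 γ ν := by
    intro ν
    have : ∑ β, Lv β * uu2 β ν = ∑ β, Lv β * uu2 ν β := by
      refine Finset.sum_congr rfl fun β _ => ?_
      rw [huusym β ν]
    rw [this]; exact step5 ν
  -- reduce the left-hand side
  have hsub : ∀ α, Aq α 0 = -Tt α - Lv α := by
    intro α; rw [hAsym α 0, hTt]; ring
  have L6 : ∑ β, Lv β * pdμ β
      = μ^2 * (∑ γ, (∑ α, dg γ α 0 * uv α) * (∑ β, Lv β * φ2 γ β))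
        + μ^2 * ∑ α, Aq α 0 * (∑ β, Lv β * uu2 β α) := by
    simp only [hpdμ, Fin.sum_univ_three]; ring
  rw [L6]
  simp only [key1, hsub, step3, step4]
  simp only [Fin.sum_univ_three]
  ring

/-- the transport equation for the inverse foliation density,
`L̊μ = −½ μ G^γ_{L̊L̊} L̊φ_γ − μ G^γ_{T̃L̊} L̊φ_γ + ½ G^γ_{L̊L̊} Tφ_γ`. -/
theorem statement7
    (U : Set Pt) (hU : IsOpen U)
    (φ u : Pt → ℝ)
    (hφ : ContDiffOn ℝ (⊤ : ℕ∞) φ U) (hu : ContDiffOn ℝ (⊤ : ℕ∞) u U)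
    (g : (Fin 3 → ℝ) → Fin 3 → Fin 3 → ℝ)
    (hgsym : ∀ q α β, g q α β = g q β α)
    (hgsmooth : ∀ α β, ContDiff ℝ (⊤ : ℕ∞) (fun q => g q α β))
    (hg00 : ∀ q, g q 0 0 = -1)
    (hinv : ∀ x ∈ U, IsUnit (gmat g (grad φ x)).det)
    (heik : ∀ x ∈ U, ∑ α, ∑ β, g (grad φ x) α β * pd α u x * pd β u x = 0)
    (hnd : ∀ x ∈ U, (∑ α, g (grad φ x) α 0 * pd α u x) ≠ 0) :
    ∀ x ∈ U,
      vfd (Lvec g φ u) (muf g φ u) x =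
        -(1/2) * muf g φ u x *
            (∑ γ, Gpair g φ γ (Lvec g φ u) (Lvec g φ u) x * vfd (Lvec g φ u) (pd γ φ) x)
          - muf g φ u x *
            (∑ γ, Gpair g φ γ (Ttvec g φ u) (Lvec g φ u) x * vfd (Lvec g φ u) (pd γ φ) x)
          + (1/2) *
            (∑ γ, Gpair g φ γ (Lvec g φ u) (Lvec g φ u) x * vfd (Tvec g φ u) (pd γ φ) x) := by
  intro x hx
  have hφx : ContDiffAt ℝ (⊤:ℕ∞) φ x := hφ.contDiffAt (hU.mem_nhds hx)
  have hux : ContDiffAt ℝ (⊤:ℕ∞) u x := hu.contDiffAt (hU.mem_nhds hx)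
  have hpdu : ∀ α, DifferentiableAt ℝ (pd α u) x := diffAt_pd hux
  have hcomp : ∀ i j : Fin 3, DifferentiableAt ℝ (fun y => g (grad φ y) i j) x := by
    intro i j
    exact (((hgsmooth i j).differentiable (by simp)).differentiableAt).comp x
      (diffAt_grad hφx)
  have hpdcomp : ∀ (ν : Fin 3) (i j : Fin 3),
      pd ν (fun y => g (grad φ y) i j) x
        = ∑ γ, dgUp g φ γ i j x * pd ν (pd γ φ) x :=
    fun ν i j => pd_comp_grad (fun q => g q i j) (hgsmooth i j) hφx
  -- contraction identities for the matrix and its inverse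
  have hAB : ∀ κ ν : Fin 3, ∑ α, g (grad φ x) κ α * glow g (grad φ x) α ν
      = if κ = ν then (1:ℝ) else 0 := by
    intro κ ν
    have h2 := congrFun (congrFun
      (Matrix.mul_nonsing_inv (gmat g (grad φ x)) (hinv x hx)) κ) ν
    rw [Matrix.mul_apply] at h2
    simpa [Matrix.one_apply, gmat, Matrix.of_apply, glow] using h2
  have hAsym : ∀ α β : Fin 3, g (grad φ x) α β = g (grad φ x) β α := fun α β => hgsym _ α β
  have hBsym : ∀ α β : Fin 3, glow g (grad φ x) α β = glow g (grad φ x) β α := by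
    intro α β
    have hT : (gmat g (grad φ x)).transpose = gmat g (grad φ x) := by
      ext i j
      exact hgsym _ j i
    have h1 := Matrix.transpose_nonsing_inv (gmat g (grad φ x))
    rw [hT] at h1
    have h2 := congrFun (congrFun h1 β) α
    rw [Matrix.transpose_apply] at h2
    exact h2
  have hdgsym : ∀ γ α β : Fin 3, dgUp g φ γ α β x = dgUp g φ γ β α x := by
    intro γ α β
    have h1 : (fun q => g q α β) = fun q => g q β α := funext fun q => hgsym q α β
    unfold dgUp
    rw [h1]
  have huusym : ∀ α β : Fin 3, pd α (pd β u) x = pd β (pd α u) x :=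
    fun α β => pd_pd_symm hux β
  -- differentiated eikonal equation
  have heik' : ∀ ν : Fin 3,
      (∑ γ, (∑ α, ∑ β, dgUp g φ γ α β x * pd α u x * pd β u x) * pd ν (pd γ φ) x)
        + 2 * ∑ α, ∑ β, g (grad φ x) α β * pd α u x * pd ν (pd β u) x = 0 := by
    intro ν
    have hterm : ∀ α β' : Fin 3, DifferentiableAt ℝ
        (fun y => g (grad φ y) α β' * pd α u y * pd β' u y) x :=
      fun α β' => ((hcomp α β').mul (hpdu α)).mul (hpdu β')
    have hinner : ∀ α : Fin 3, DifferentiableAt ℝ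
        (fun y => ∑ β', g (grad φ y) α β' * pd α u y * pd β' u y) x :=
      fun α => DifferentiableAt.fun_sum fun β' _ => hterm α β'
    have h0 : pd ν (fun y => ∑ α, ∑ β', g (grad φ y) α β' * pd α u y * pd β' u y) x = 0 := by
      have hev : (fun y => ∑ α, ∑ β', g (grad φ y) α β' * pd α u y * pd β' u y)
          =ᶠ[nhds x] (fun _ => (0:ℝ)) :=
        Filter.eventually_of_mem (hU.mem_nhds hx) heik
      rw [pd_congr hev]
      show fderiv ℝ (fun _ => (0:ℝ)) x (Pi.single ν 1) = 0
      rw [fderiv_const_apply]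
      rfl
    have h2 : ∀ α β' : Fin 3, pd ν (fun y => g (grad φ y) α β' * pd α u y * pd β' u y) x
        = ((∑ γ, dgUp g φ γ α β' x * pd ν (pd γ φ) x) * pd α u x
            + g (grad φ x) α β' * pd ν (pd α u) x) * pd β' u x
          + g (grad φ x) α β' * pd α u x * pd ν (pd β' u) x := by
      intro α β'
      have e1 := pd_mulF (β := ν) (x := x)
        (f := fun y => g (grad φ y) α β' * pd α u y) (h := fun y => pd β' u y)
        ((hcomp α β').mul (hpdu α)) (hpdu β')
      have e2 := pd_mulF (β := ν) (x := x)
        (f := fun y => g (grad φ y) α β') (h := fun y => pd α u y)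
        (hcomp α β') (hpdu α)
      rw [e1, e2, hpdcomp ν α β']
    have h3 : ∑ α, ∑ β',
        (((∑ γ, dgUp g φ γ α β' x * pd ν (pd γ φ) x) * pd α u x
            + g (grad φ x) α β' * pd ν (pd α u) x) * pd β' u x
          + g (grad φ x) α β' * pd α u x * pd ν (pd β' u) x) = 0 := by
      rw [← Finset.sum_congr rfl fun α (_ : α ∈ Finset.univ) =>
        Finset.sum_congr rfl fun β' (_ : β' ∈ Finset.univ) => h2 α β']
      rw [← Finset.sum_congr rfl fun α (_ : α ∈ Finset.univ) =>
        pd_sumF (β := ν) (x := x) Finset.univ _ (fun β' _ => hterm α β')]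
      rw [← pd_sumF (β := ν) (x := x) Finset.univ _ (fun α _ => hinner α)]
      exact h0
    have hA10 : g (grad φ x) 1 0 = g (grad φ x) 0 1 := hAsym 1 0
    have hA20 : g (grad φ x) 2 0 = g (grad φ x) 0 2 := hAsym 2 0
    have hA21 : g (grad φ x) 2 1 = g (grad φ x) 1 2 := hAsym 2 1
    simp only [Fin.sum_univ_three, hA10, hA20, hA21] at h3 ⊢
    linear_combination h3
  -- derivative of the inverse foliation density
  have hAfd : DifferentiableAt ℝ (fun y => ∑ α, g (grad φ y) α 0 * pd α u y) x :=
    DifferentiableAt.fun_sum fun α _ => (hcomp α 0).mul (hpdu α)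
  have hAfx : (∑ α, g (grad φ x) α 0 * pd α u x) ≠ 0 := hnd x hx
  have hpdAf : ∀ β : Fin 3, pd β (fun y => ∑ α, g (grad φ y) α 0 * pd α u y) x
      = (∑ α, (∑ γ, dgUp g φ γ α 0 x * pd β (pd γ φ) x) * pd α u x)
        + ∑ α, g (grad φ x) α 0 * pd β (pd α u) x := by
    intro β
    rw [pd_sumF (β := β) (x := x) Finset.univ _ (fun α _ => (hcomp α 0).fun_mul (hpdu α))]
    rw [Finset.sum_congr rfl fun α (_ : α ∈ Finset.univ) => pd_mulF (β := β) (x := x)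
      (f := fun y => g (grad φ y) α 0) (h := fun y => pd α u y) (hcomp α 0) (hpdu α)]
    rw [Finset.sum_congr rfl fun α (_ : α ∈ Finset.univ) => by rw [hpdcomp β α 0]]
    rw [Finset.sum_add_distrib]
  have hpdμ : ∀ β : Fin 3, pd β (muf g φ u) x
      = (muf g φ u x)^2 * ((∑ α, (∑ γ, dgUp g φ γ α 0 x * pd β (pd γ φ) x) * pd α u x)
        + ∑ α, g (grad φ x) α 0 * pd β (pd α u) x) := by
    intro β
    have h1 : pd β (muf g φ u) x
        = -pd β (fun y => (∑ α, g (grad φ y) α 0 * pd α u y)⁻¹) x :=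
      pd_negF (f := fun y => (∑ α, g (grad φ y) α 0 * pd α u y)⁻¹)
    rw [h1, pd_invF hAfd hAfx, hpdAf β]
    have h2 : muf g φ u x = -(∑ α, g (grad φ x) α 0 * pd α u x)⁻¹ := rfl
    rw [h2]
    rw [neg_sq, inv_pow]
    ring
  -- assemble via the algebraic identity
  exact key_algebra (muf g φ u x) (fun α β => g (grad φ x) α β)
    (fun α β => glow g (grad φ x) α β) (fun γ α β => dgUp g φ γ α β x)
    (fun α => pd α u x) (fun ν β => pd ν (pd β u) x) (fun γ β => pd β (pd γ φ) x)
    (fun β => Lvec g φ u x β) (fun β => Ttvec g φ u x β)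
    (fun γ α β => Gc g φ γ α β x) (fun β => pd β (muf g φ u) x)
    hAB hAsym hBsym hdgsym huusym heik' (fun β => rfl) (fun β => rfl)
    (fun γ α β => Gc_formula g hgsmooth φ x (hinv x hx) γ α β) hpdμ

end
end

section
/- Let U ⊆ ℝ³ be open and let φ ∈ C^∞(U) solve ∑_{α,β=0}^{2} g^{αβ}(∂φ) ∂²_{αβ}φ = 0 on U, where g^{αβ} = g^{βα} are smooth functions of q ∈ ℝ³ such that (g^{αβ}(∂φ)) is invertible on U with inverse (g_{αβ}). Then for each γ ∈ {0,1,2}, the function φ_γ = ∂_γφ satisfies the quasilinear wave system □_g φ_γ = ∑_{α,β,ν} (∂g^{αβ}/∂q_ν)(∂φ) ( −∂_νφ_γ ∂_βφ_α + ∂_νφ_α ∂_βφ_γ ) + ½ ( ∑_{α,β} g^{αβ} G^ν_{αβ} ) g^{λκ} ∂_κφ_ν ∂_λφ_γ, where all coefficient functions are evaluated at ∂φ and sums run over repeated indices in {0,1,2}. -/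
noncomputable section

open Real Set MeasureTheory

section Statement8Aux

private lemma clm_expand8 (L : (Fin 3 → ℝ) →L[ℝ] ℝ) (v : Fin 3 → ℝ) :
    L v = ∑ ν : Fin 3, v ν * L (Pi.single ν 1) := by
  have hv : v = ∑ ν : Fin 3, v ν • (Pi.single ν 1 : Fin 3 → ℝ) := by
    funext j
    simp [Finset.sum_apply, Pi.single_apply]
  conv_lhs => rw [hv]
  rw [map_sum]
  simp

private lemma pd_congr8 {α : Fin 3} {f h : Pt → ℝ} {x : Pt} (hfh : f =ᶠ[nhds x] h) :
    pd α f x = pd α h x := by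
  unfold pd; rw [hfh.fderiv_eq]

private lemma pd_contDiffOn8 {U : Set Pt} (hU : IsOpen U) {f : Pt → ℝ}
    (hf : ContDiffOn ℝ (⊤:ℕ∞) f U) (α : Fin 3) : ContDiffOn ℝ (⊤:ℕ∞) (pd α f) U := by
  have h1 : ContDiffOn ℝ (⊤:ℕ∞) (fderiv ℝ f) U := hf.fderiv_of_isOpen hU (by simp)
  exact h1.clm_apply contDiffOn_const

private lemma diffAt8 {U : Set Pt} (hU : IsOpen U) {f : Pt → ℝ}
    (hf : ContDiffOn ℝ (⊤:ℕ∞) f U) {x : Pt} (hx : x ∈ U) : DifferentiableAt ℝ f x :=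
  ((hf x hx).contDiffAt (hU.mem_nhds hx)).differentiableAt (by simp)

private lemma pd_symm8 {U : Set Pt} (hU : IsOpen U) {f : Pt → ℝ}
    (hf : ContDiffOn ℝ (⊤:ℕ∞) f U) {x : Pt} (hx : x ∈ U) (α β : Fin 3) :
    pd α (pd β f) x = pd β (pd α f) x := by
  have hca : ContDiffAt ℝ (⊤:ℕ∞) f x := (hf x hx).contDiffAt (hU.mem_nhds hx)
  have hsymm := hca.isSymmSndFDerivAt (by simp; exact WithTop.coe_le_coe.mpr (le_top : (2:ℕ∞) ≤ ⊤))
  have hdf : DifferentiableAt ℝ (fderiv ℝ f) x :=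
    (hca.fderiv_right (m := 1) (by decide)).differentiableAt one_ne_zero
  have key : ∀ a b : Fin 3, pd a (pd b f) x
      = fderiv ℝ (fderiv ℝ f) x (Pi.single a 1) (Pi.single b 1) := by
    intro a b
    unfold pd
    rw [fderiv_clm_apply hdf (differentiableAt_const _)]
    simp
  rw [key, key, hsymm]

private lemma pd_mul8 {A B : Pt → ℝ} {x : Pt} (hA : DifferentiableAt ℝ A x)
    (hB : DifferentiableAt ℝ B x) (γ : Fin 3) :
    pd γ (fun z => A z * B z) x = pd γ A x * B x + A x * pd γ B x := by
  unfold pd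
  rw [fderiv_fun_mul hA hB]
  simp only [ContinuousLinearMap.add_apply, ContinuousLinearMap.smul_apply, smul_eq_mul]
  ring

private lemma pd_sum8 {ι : Type} (s : Finset ι) {F : ι → Pt → ℝ} {x : Pt}
    (h : ∀ i ∈ s, DifferentiableAt ℝ (F i) x) (γ : Fin 3) :
    pd γ (fun z => ∑ i ∈ s, F i z) x = ∑ i ∈ s, pd γ (F i) x := by
  unfold pd
  rw [fderiv_fun_sum h]
  simp

private lemma pd_comp_grad8 {U : Set Pt} (hU : IsOpen U) {φ : Pt → ℝ}
    (hφ : ContDiffOn ℝ (⊤:ℕ∞) φ U) {x : Pt} (hx : x ∈ U)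
    {G : (Fin 3 → ℝ) → ℝ} (hG : Differentiable ℝ G) (γ : Fin 3) :
    pd γ (fun z => G (grad φ z)) x
      = ∑ ν, pd γ (pd ν φ) x * fderiv ℝ G (grad φ x) (Pi.single ν 1) := by
  have hpdd : ∀ ν : Fin 3, DifferentiableAt ℝ (pd ν φ) x :=
    fun ν => diffAt8 hU (pd_contDiffOn8 hU hφ ν) hx
  have hgradd : DifferentiableAt ℝ (grad φ) x := differentiableAt_pi.2 hpdd
  have hcomp : pd γ (fun z => G (grad φ z)) x
      = fderiv ℝ G (grad φ x) (fderiv ℝ (grad φ) x (Pi.single γ 1)) := by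
    unfold pd
    rw [show (fun z => G (grad φ z)) = G ∘ grad φ from rfl,
      fderiv_comp x (hG (grad φ x)) hgradd]
    rfl
  rw [hcomp, clm_expand8]
  refine Finset.sum_congr rfl fun ν _ => ?_
  have hpi : fderiv ℝ (grad φ) x = ContinuousLinearMap.pi fun ν => fderiv ℝ (pd ν φ) x :=
    fderiv_pi hpdd
  rw [hpi]
  rfl

private lemma det_diff8 {g : (Fin 3 → ℝ) → Fin 3 → Fin 3 → ℝ}
    (hgd : ∀ α β, Differentiable ℝ (fun q => g q α β)) :
    Differentiable ℝ (fun q => (gmat g q).det) := by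
  have : (fun q => (gmat g q).det) = fun q =>
      g q 0 0 * g q 1 1 * g q 2 2 - g q 0 0 * g q 1 2 * g q 2 1 - g q 0 1 * g q 1 0 * g q 2 2 +
        g q 0 1 * g q 1 2 * g q 2 0 + g q 0 2 * g q 1 0 * g q 2 1 - g q 0 2 * g q 1 1 * g q 2 0 := by
    funext q; rw [Matrix.det_fin_three]; rfl
  rw [this]
  fun_prop

private lemma adj_diff8 {g : (Fin 3 → ℝ) → Fin 3 → Fin 3 → ℝ}
    (hgd : ∀ α β, Differentiable ℝ (fun q => g q α β)) (i j : Fin 3) :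
    Differentiable ℝ (fun q => (gmat g q).adjugate i j) := by
  have h00 : (fun q => (gmat g q).adjugate 0 0) = fun q => g q 1 1 * g q 2 2 - g q 1 2 * g q 2 1 :=
    funext fun q => by rw [Matrix.adjugate_fin_three]; simp [gmat]
  have h01 : (fun q => (gmat g q).adjugate 0 1) = fun q => -(g q 0 1 * g q 2 2) + g q 0 2 * g q 2 1 :=
    funext fun q => by rw [Matrix.adjugate_fin_three]; simp [gmat]
  have h02 : (fun q => (gmat g q).adjugate 0 2) = fun q => g q 0 1 * g q 1 2 - g q 0 2 * g q 1 1 :=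
    funext fun q => by rw [Matrix.adjugate_fin_three]; simp [gmat]
  have h10 : (fun q => (gmat g q).adjugate 1 0) = fun q => -(g q 1 0 * g q 2 2) + g q 1 2 * g q 2 0 :=
    funext fun q => by rw [Matrix.adjugate_fin_three]; simp [gmat]
  have h11 : (fun q => (gmat g q).adjugate 1 1) = fun q => g q 0 0 * g q 2 2 - g q 0 2 * g q 2 0 :=
    funext fun q => by rw [Matrix.adjugate_fin_three]; simp [gmat]
  have h12 : (fun q => (gmat g q).adjugate 1 2) = fun q => -(g q 0 0 * g q 1 2) + g q 0 2 * g q 1 0 :=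
    funext fun q => by rw [Matrix.adjugate_fin_three]; simp [gmat]
  have h20 : (fun q => (gmat g q).adjugate 2 0) = fun q => g q 1 0 * g q 2 1 - g q 1 1 * g q 2 0 :=
    funext fun q => by rw [Matrix.adjugate_fin_three]; simp [gmat]
  have h21 : (fun q => (gmat g q).adjugate 2 1) = fun q => -(g q 0 0 * g q 2 1) + g q 0 1 * g q 2 0 :=
    funext fun q => by rw [Matrix.adjugate_fin_three]; simp [gmat]
  have h22 : (fun q => (gmat g q).adjugate 2 2) = fun q => g q 0 0 * g q 1 1 - g q 0 1 * g q 1 0 :=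
    funext fun q => by rw [Matrix.adjugate_fin_three]; simp [gmat]
  fin_cases i <;> fin_cases j
  · exact (show Differentiable ℝ (fun q => (gmat g q).adjugate 0 0) by rw [h00]; fun_prop)
  · exact (show Differentiable ℝ (fun q => (gmat g q).adjugate 0 1) by rw [h01]; fun_prop)
  · exact (show Differentiable ℝ (fun q => (gmat g q).adjugate 0 2) by rw [h02]; fun_prop)
  · exact (show Differentiable ℝ (fun q => (gmat g q).adjugate 1 0) by rw [h10]; fun_prop)
  · exact (show Differentiable ℝ (fun q => (gmat g q).adjugate 1 1) by rw [h11]; fun_prop)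
  · exact (show Differentiable ℝ (fun q => (gmat g q).adjugate 1 2) by rw [h12]; fun_prop)
  · exact (show Differentiable ℝ (fun q => (gmat g q).adjugate 2 0) by rw [h20]; fun_prop)
  · exact (show Differentiable ℝ (fun q => (gmat g q).adjugate 2 1) by rw [h21]; fun_prop)
  · exact (show Differentiable ℝ (fun q => (gmat g q).adjugate 2 2) by rw [h22]; fun_prop)


private lemma glow_diff8 {g : (Fin 3 → ℝ) → Fin 3 → Fin 3 → ℝ}
    (hgd : ∀ α β, Differentiable ℝ (fun q => g q α β)) {q₀ : Fin 3 → ℝ}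
    (hdet0 : (gmat g q₀).det ≠ 0) (k b : Fin 3) :
    DifferentiableAt ℝ (fun q => glow g q k b) q₀ := by
  have heq : (fun q => glow g q k b) = fun q => ((gmat g q).det)⁻¹ * (gmat g q).adjugate k b := by
    funext q
    show ((gmat g q)⁻¹) k b = _
    rw [Matrix.inv_def]
    simp [Ring.inverse_eq_inv']
  rw [heq]
  exact ((det_diff8 hgd q₀).inv hdet0).mul (adj_diff8 hgd k b q₀)

private lemma core_alg8 (γ : Fin 3) (G L H T : Fin 3 → Fin 3 → ℝ)
    (D Gl : Fin 3 → Fin 3 → Fin 3 → ℝ)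
    (hG : ∀ a b, G a b = G b a)
    (hH : ∀ a b, H a b = H b a)
    (hD : ∀ n a b, D n a b = D n b a)
    (hGl : ∀ n a b, Gl n a b = Gl n b a)
    (hGL : ∀ a b, (∑ k, G a k * L k b) = if a = b then (1:ℝ) else 0)
    (hrel : ∀ n k m, (∑ b, Gl n k b * G b m) = -∑ b, L k b * D n b m)
    (hpde : (∑ a, ∑ b, G a b * T a b) = -∑ a, ∑ b, (∑ n, H γ n * D n a b) * H a b) :
    (∑ a, ∑ b, G a b * T a b)
      - (∑ a, ∑ b, ∑ l, G a b * ((1/2) * ∑ k, ∑ n, G l k *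
          (Gl n k b * H a n + Gl n a k * H b n - Gl n a b * H k n)) * H l γ)
    = (∑ a, ∑ b, ∑ n, D n a b * (-(H n γ) * H b a + H n a * H b γ))
      + (1/2) * ∑ n, (∑ a, ∑ b, G a b * Gl n a b) *
          (∑ l, ∑ k, G l k * H k n * H l γ) := by
  have key1 : ∀ n l m : Fin 3, (∑ k, G l k * ∑ b, Gl n k b * G m b) = -D n l m := by
    intro n l m
    have e1 : ∀ k : Fin 3, (∑ b, Gl n k b * G m b) = -∑ b, L k b * D n b m := by
      intro k
      rw [← hrel n k m]
      exact Finset.sum_congr rfl fun b _ => by rw [hG m b]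
    calc (∑ k, G l k * ∑ b, Gl n k b * G m b)
        = ∑ k, G l k * -∑ b, L k b * D n b m :=
          Finset.sum_congr rfl fun k _ => by rw [e1 k]
      _ = -∑ b, (∑ k, G l k * L k b) * D n b m := by
          simp only [Fin.sum_univ_three]; ring
      _ = -∑ b, (if l = b then (1:ℝ) else 0) * D n b m := by simp only [hGL]
      _ = -D n l m := by simp [ite_mul]
  have hQd : (∑ a, ∑ b, ∑ l, G a b * ((1/2) * ∑ k, ∑ n, G l k *
          (Gl n k b * H a n + Gl n a k * H b n - Gl n a b * H k n)) * H l γ)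
      = (1/2) * ((∑ l, ∑ n, (∑ a, (∑ k, G l k * ∑ b, Gl n k b * G a b) * H a n) * H l γ)
        + (∑ l, ∑ n, (∑ b, (∑ k, G l k * ∑ a, Gl n a k * G a b) * H b n) * H l γ)
        - ∑ n, (∑ a, ∑ b, G a b * Gl n a b) * (∑ l, ∑ k, G l k * H k n * H l γ)) := by
    simp only [Fin.sum_univ_three]; ring
  have hZ2 : (∑ l, ∑ n, (∑ b, (∑ k, G l k * ∑ a, Gl n a k * G a b) * H b n) * H l γ)
      = (∑ l, ∑ n, (∑ a, (∑ k, G l k * ∑ b, Gl n k b * G a b) * H a n) * H l γ) := by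
    refine Finset.sum_congr rfl fun l _ => Finset.sum_congr rfl fun n _ => ?_
    refine congrArg (· * H l γ) ?_
    refine Finset.sum_congr rfl fun c _ => ?_
    refine congrArg (· * H c n) ?_
    refine Finset.sum_congr rfl fun k _ => ?_
    refine congrArg (G l k * ·) ?_
    refine Finset.sum_congr rfl fun e _ => ?_
    rw [hGl n e k, hG e c]
  rw [hpde, hQd, hZ2]
  simp only [key1]
  simp only [Fin.sum_univ_three]
  simp only [hH, hD]
  ring

end Statement8Aux

/-- each `φ_γ = ∂_γφ` solves the quasilinear wave system
`□_g φ_γ = ∂_{q_ν}g^{αβ}(−∂_νφ_γ ∂_βφ_α + ∂_νφ_α ∂_βφ_γ)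
           + ½ (g^{αβ}G^ν_{αβ}) g^{λκ} ∂_κφ_ν ∂_λφ_γ`. -/


theorem statement8
    (U : Set Pt) (hU : IsOpen U)
    (φ : Pt → ℝ) (hφ : ContDiffOn ℝ (⊤ : ℕ∞) φ U)
    (g : (Fin 3 → ℝ) → Fin 3 → Fin 3 → ℝ)
    (hgsym : ∀ q α β, g q α β = g q β α)
    (hgsmooth : ∀ α β, ContDiff ℝ (⊤ : ℕ∞) (fun q => g q α β))
    (hinv : ∀ x ∈ U, IsUnit (gmat g (grad φ x)).det)
    (heq : ∀ x ∈ U, ∑ α, ∑ β, g (grad φ x) α β * pd α (pd β φ) x = 0) :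
    ∀ x ∈ U, ∀ γ : Fin 3,
      boxg g φ (pd γ φ) x =
        (∑ α, ∑ β, ∑ ν, dgUp g φ ν α β x *
            (-(pd ν (pd γ φ) x) * pd β (pd α φ) x + pd ν (pd α φ) x * pd β (pd γ φ) x))
        + (1/2) * ∑ ν, (∑ α, ∑ β, g (grad φ x) α β * Gc g φ ν α β x) *
            (∑ lam, ∑ κ, g (grad φ x) lam κ * pd κ (pd ν φ) x * pd lam (pd γ φ) x) := by
  intro x hx γ
  have hgd : ∀ α β, Differentiable ℝ (fun q => g q α β) :=
    fun α β => (hgsmooth α β).differentiable (by decide)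
  have hφ2 : ∀ β : Fin 3, ContDiffOn ℝ (⊤:ℕ∞) (pd β φ) U := fun β => pd_contDiffOn8 hU hφ β
  have hφ3 : ∀ α β : Fin 3, ContDiffOn ℝ (⊤:ℕ∞) (pd α (pd β φ)) U :=
    fun α β => pd_contDiffOn8 hU (hφ2 β) α
  have hdet : IsUnit (gmat g (grad φ x)).det := hinv x hx
  have hdet0 : (gmat g (grad φ x)).det ≠ 0 := hdet.ne_zero
  have hH : ∀ a b : Fin 3, pd a (pd b φ) x = pd b (pd a φ) x := fun a b => pd_symm8 hU hφ hx a b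
  have hT : ∀ a b : Fin 3, pd γ (pd a (pd b φ)) x = pd a (pd b (pd γ φ)) x := by
    intro a b
    have h1 : pd γ (pd a (pd b φ)) x = pd a (pd γ (pd b φ)) x := pd_symm8 hU (hφ2 b) hx γ a
    have h2 : pd γ (pd b φ) =ᶠ[nhds x] pd b (pd γ φ) := by
      filter_upwards [hU.mem_nhds hx] with y hy
      exact pd_symm8 hU hφ hy γ b
    rw [h1, pd_congr8 h2]
  have hD : ∀ n a b : Fin 3, dgUp g φ n a b x = dgUp g φ n b a x := by
    intro n a b
    unfold dgUp
    rw [show (fun q => g q a b) = (fun q => g q b a) from funext fun q => hgsym q a b]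
  have hglowsym : ∀ (q : Fin 3 → ℝ) (a b : Fin 3), glow g q a b = glow g q b a := by
    intro q a b
    have ht : Matrix.transpose (gmat g q) = gmat g q := by
      ext i j; exact hgsym q j i
    calc glow g q a b = ((Matrix.transpose (gmat g q))⁻¹) a b := by unfold glow; rw [ht]
      _ = (Matrix.transpose ((gmat g q)⁻¹)) a b := by rw [← Matrix.transpose_nonsing_inv]
      _ = glow g q b a := rfl
  have hGl : ∀ n a b : Fin 3, Gc g φ n a b x = Gc g φ n b a x := by
    intro n a b
    unfold Gc
    rw [show (fun q => glow g q a b) = (fun q => glow g q b a) from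
      funext fun q => hglowsym q a b]
  have hGL : ∀ a b : Fin 3,
      (∑ k, g (grad φ x) a k * glow g (grad φ x) k b) = if a = b then (1:ℝ) else 0 := by
    intro a b
    have h1 := Matrix.mul_nonsing_inv (gmat g (grad φ x)) hdet
    have h2 : ((gmat g (grad φ x)) * (gmat g (grad φ x))⁻¹) a b
        = (1 : Matrix (Fin 3) (Fin 3) ℝ) a b := by rw [h1]
    rw [Matrix.mul_apply, Matrix.one_apply] at h2
    exact h2
  have hglowdiffAt : ∀ k b : Fin 3, DifferentiableAt ℝ (fun q => glow g q k b) (grad φ x) :=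
    fun k b => glow_diff8 hgd hdet0 k b
  have hrel : ∀ n k m : Fin 3, (∑ b, Gc g φ n k b x * g (grad φ x) b m)
      = -∑ b, glow g (grad φ x) k b * dgUp g φ n b m x := by
    intro n k m
    have hVopen : IsOpen {q : Fin 3 → ℝ | (gmat g q).det ≠ 0} := by
      have he : {q : Fin 3 → ℝ | (gmat g q).det ≠ 0}
          = (fun q => (gmat g q).det) ⁻¹' ({(0:ℝ)}ᶜ) := by
        ext q; simp
      rw [he]
      exact isOpen_compl_singleton.preimage (det_diff8 hgd).continuous
    have hev : (fun q => ∑ b, glow g q k b * g q b m) =ᶠ[nhds (grad φ x)]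
        (fun _ => if k = m then (1:ℝ) else 0) := by
      filter_upwards [hVopen.mem_nhds hdet0] with q hq
      have hu : IsUnit (gmat g q).det := isUnit_iff_ne_zero.mpr hq
      have h1 := Matrix.nonsing_inv_mul (gmat g q) hu
      have h2 : ((gmat g q)⁻¹ * (gmat g q)) k m = (1 : Matrix (Fin 3) (Fin 3) ℝ) k m := by
        rw [h1]
      rw [Matrix.mul_apply, Matrix.one_apply] at h2
      exact h2
    have h0 : fderiv ℝ (fun q => ∑ b, glow g q k b * g q b m) (grad φ x) (Pi.single n 1)
        = 0 := by
      rw [hev.fderiv_eq]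
      simp
    rw [fderiv_fun_sum (fun b _ => (hglowdiffAt k b).fun_mul ((hgd b m) (grad φ x)))] at h0
    rw [ContinuousLinearMap.sum_apply] at h0
    have h3 : ∀ b ∈ (Finset.univ : Finset (Fin 3)),
        fderiv ℝ (fun q => glow g q k b * g q b m) (grad φ x) (Pi.single n 1)
          = Gc g φ n k b x * g (grad φ x) b m + glow g (grad φ x) k b * dgUp g φ n b m x := by
      intro b _
      rw [fderiv_fun_mul (hglowdiffAt k b) ((hgd b m) (grad φ x))]
      simp only [ContinuousLinearMap.add_apply, ContinuousLinearMap.smul_apply, smul_eq_mul]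
      unfold Gc dgUp
      ring
    rw [Finset.sum_congr rfl h3, Finset.sum_add_distrib] at h0
    linarith
  have hdiffg : ∀ a b : Fin 3, DifferentiableAt ℝ (fun z => g (grad φ z) a b) x := by
    intro a b
    have hgradd : DifferentiableAt ℝ (grad φ) x :=
      differentiableAt_pi.2 fun ν => diffAt8 hU (hφ2 ν) hx
    exact DifferentiableAt.comp x ((hgd a b) (grad φ x)) hgradd
  have hdiffH : ∀ a b : Fin 3, DifferentiableAt ℝ (pd a (pd b φ)) x :=
    fun a b => diffAt8 hU (hφ3 a b) hx
  have hpdcomp : ∀ a b : Fin 3, pd γ (fun z => g (grad φ z) a b) x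
      = ∑ ν, pd γ (pd ν φ) x * dgUp g φ ν a b x :=
    fun a b => pd_comp_grad8 hU hφ hx (hgd a b) γ
  have hE : pd γ (fun z => ∑ a, ∑ b, g (grad φ z) a b * pd a (pd b φ) z) x = 0 := by
    have hev : (fun z => ∑ a, ∑ b, g (grad φ z) a b * pd a (pd b φ) z)
        =ᶠ[nhds x] (fun _ => (0:ℝ)) := by
      filter_upwards [hU.mem_nhds hx] with y hy
      exact heq y hy
    rw [pd_congr8 hev]
    unfold pd
    simp
  have hstep : pd γ (fun z => ∑ a, ∑ b, g (grad φ z) a b * pd a (pd b φ) z) x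
      = ∑ a, ∑ b, ((∑ ν, pd γ (pd ν φ) x * dgUp g φ ν a b x) * pd a (pd b φ) x
          + g (grad φ x) a b * pd a (pd b (pd γ φ)) x) := by
    rw [pd_sum8 Finset.univ
      (fun a _ => DifferentiableAt.fun_sum fun b _ => (hdiffg a b).fun_mul (hdiffH a b)) γ]
    refine Finset.sum_congr rfl fun a _ => ?_
    rw [pd_sum8 Finset.univ (fun b _ => (hdiffg a b).fun_mul (hdiffH a b)) γ]
    refine Finset.sum_congr rfl fun b _ => ?_
    rw [pd_mul8 (hdiffg a b) (hdiffH a b) γ, hpdcomp a b, hT a b]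
  have hpde : (∑ a, ∑ b, g (grad φ x) a b * pd a (pd b (pd γ φ)) x)
      = -∑ a, ∑ b, (∑ ν, pd γ (pd ν φ) x * dgUp g φ ν a b x) * pd a (pd b φ) x := by
    have h0 := hE
    rw [hstep] at h0
    simp only [Finset.sum_add_distrib] at h0
    linarith
  have hmain := core_alg8 γ (fun a b => g (grad φ x) a b) (fun a b => glow g (grad φ x) a b)
      (fun a b => pd a (pd b φ) x) (fun a b => pd a (pd b (pd γ φ)) x)
      (fun n a b => dgUp g φ n a b x) (fun n a b => Gc g φ n a b x)
      (fun a b => hgsym (grad φ x) a b) hH hD hGl hGL hrel hpde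
  simp only [boxg, _root_.Gamma]
  exact hmain


end
end

section
/- There exists a constant C > 0 with the following property: for every δ ∈ (0,1], every f ∈ C^∞(ℝ×ℝ²), every t ≥ 1+2δ, and every x ∈ ℝ² with t/4 ≤ |x| ≤ t − 2δ, one has |f(t,x)| ≤ C ( |f(t, B_t^x)| + t^{−1/2} ∑_{a ≤ 1, |β| ≤ 1} ‖Ω^a ∂^β f(t,·)‖_{L²({y ∈ ℝ² : t/4 ≤ |y| ≤ t−2δ})} ), where B_t^x = (t−2δ) x/|x| is the point where the ray from the spatial origin through x meets the circle {|y| = t−2δ} (i.e., the intersection with the boundary cone t − |y| = 2δ), and ∂^β ranges over ∂_t, ∂_1, ∂_2 of order |β| ≤ 1. -/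
noncomputable section
set_option maxHeartbeats 1000000

open Real Set MeasureTheory

section Helpers

theorem contDiff_pd {f : Pt → ℝ} (hf : ContDiff ℝ (⊤:ℕ∞) f) (α : Fin 3) : ContDiff ℝ (⊤:ℕ∞) (pd α f) := by
  have h1 : ContDiff ℝ ((⊤:ℕ∞):WithTop ℕ∞) (fderiv ℝ f) := hf.fderiv_right (by simp)
  exact ((ContinuousLinearMap.apply ℝ ℝ (Pi.single α (1:ℝ))).contDiff).comp h1

theorem continuous_mkPt (t : ℝ) : Continuous (mkPt t) := by
  apply continuous_pi
  intro i
  refine Fin.cases ?_ (fun j => ?_) i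
  · show Continuous fun y : Fin 2 → ℝ => t; exact continuous_const
  · show Continuous fun y : Fin 2 → ℝ => y j; exact continuous_apply j

theorem mkPt_affine (t a b : ℝ) : mkPt t ![a,b] = mkPt t ![0,0] + a • (Pi.single 1 1 : Pt) + b • (Pi.single 2 1 : Pt) := by
  funext i; fin_cases i
  · show t = t + _ + _; simp
  · show a = 0 + a*1 + b*0; ring
  · show b = 0 + a*0 + b*1; ring

theorem curve_deriv {u : Pt → ℝ} (hu : ContDiff ℝ (⊤:ℕ∞) u) (t : ℝ) {α β : ℝ → ℝ} {a' b' s : ℝ}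
    (hα : HasDerivAt α a' s) (hβ : HasDerivAt β b' s) :
    HasDerivAt (fun s => u (mkPt t ![α s, β s]))
      (a' * pd 1 u (mkPt t ![α s, β s]) + b' * pd 2 u (mkPt t ![α s, β s])) s := by
  have hc : HasDerivAt (fun s => mkPt t ![α s, β s])
      (a' • (Pi.single 1 1 : Pt) + b' • (Pi.single 2 1 : Pt)) s := by
    have : (fun s => mkPt t ![α s, β s]) =
        fun s => mkPt t ![0,0] + α s • (Pi.single 1 1 : Pt) + β s • (Pi.single 2 1 : Pt) := by
      funext s; exact mkPt_affine t (α s) (β s)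
    rw [this]
    exact ((hα.smul_const _).const_add _).add (hβ.smul_const _)
  have hdu : HasFDerivAt u (fderiv ℝ u (mkPt t ![α s, β s])) (mkPt t ![α s, β s]) :=
    (hu.differentiable (by simp) _).hasFDerivAt
  have := hdu.comp_hasDerivAt s hc
  simpa [map_add, _root_.map_smul, pd, mul_comm, Function.comp_def] using this

theorem abs_lin2 (c s u v : ℝ) (hc : |c| ≤ 1) (hs : |s| ≤ 1) :
    |c * u + s * v| ≤ |u| + |v| := by
  calc |c * u + s * v| ≤ |c * u| + |s * v| := abs_add_le _ _
    _ ≤ |u| + |v| := by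
        rw [abs_mul, abs_mul]
        nlinarith [abs_nonneg u, abs_nonneg v, abs_nonneg c, abs_nonneg s]

theorem abs_lin4 (c s u v w x' : ℝ) (hc : |c| ≤ 1) (hs : |s| ≤ 1) :
    |(-s) * u + c * v + (c * w + s * x')| ≤ (|u| + |w|) + (|v| + |x'|) := by
  calc |(-s) * u + c * v + (c * w + s * x')|
      ≤ |(-s) * u + c * v| + |c * w + s * x'| := abs_add_le _ _
    _ ≤ (|u| + |v|) + (|w| + |x'|) := by
        apply add_le_add
        · calc |(-s) * u + c * v| ≤ |(-s)*u| + |c*v| := abs_add_le _ _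
            _ ≤ |u| + |v| := by
                rw [abs_mul, abs_mul, abs_neg]
                nlinarith [abs_nonneg u, abs_nonneg v, abs_nonneg c, abs_nonneg s]
        · exact abs_lin2 c s w x' hc hs
    _ = (|u| + |w|) + (|v| + |x'|) := by ring

theorem my_sqrt_add_le {a b : ℝ} (ha : 0 ≤ a) (hb : 0 ≤ b) :
    Real.sqrt (a + b) ≤ Real.sqrt a + Real.sqrt b := by
  have h := Real.sqrt_le_sqrt (show a + b ≤ (Real.sqrt a + Real.sqrt b)^2 by
    nlinarith [Real.sq_sqrt ha, Real.sq_sqrt hb, Real.sqrt_nonneg a, Real.sqrt_nonneg b])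
  rwa [Real.sqrt_sq (by positivity)] at h

theorem l2_prod_bound {A : Set (Fin 2 → ℝ)} (hcpt : IsCompact A) (hmeas : MeasurableSet A)
    {G1 G2 : (Fin 2 → ℝ) → ℝ} (h1 : Continuous G1) (h2 : Continuous G2) {S : ℝ}
    (hb1 : l2norm A G1 ≤ S) (hb2 : l2norm A G2 ≤ S) :
    ∫ y in A, |G1 y| * |G2 y| ≤ S ^ 2 := by
  have hi1 : IntegrableOn (fun y => G1 y ^ 2) A := ((h1.pow 2).continuousOn).integrableOn_compact hcpt
  have hi2 : IntegrableOn (fun y => G2 y ^ 2) A := ((h2.pow 2).continuousOn).integrableOn_compact hcpt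
  have hiprod : IntegrableOn (fun y => |G1 y| * |G2 y|) A :=
    ((h1.abs.mul h2.abs).continuousOn).integrableOn_compact hcpt
  have hmono : ∫ y in A, |G1 y| * |G2 y| ≤ ∫ y in A, (G1 y ^ 2 + G2 y ^ 2)/2 := by
    apply setIntegral_mono_on hiprod
      ((((h1.pow 2).add (h2.pow 2)).div_const 2).continuousOn.integrableOn_compact hcpt) hmeas
    intro y _
    show |G1 y| * |G2 y| ≤ (G1 y ^ 2 + G2 y ^ 2) / 2
    nlinarith [sq_nonneg (|G1 y| - |G2 y|), sq_abs (G1 y), sq_abs (G2 y)]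
  have hsplit : ∫ y in A, (G1 y ^ 2 + G2 y ^ 2)/2 = ((∫ y in A, G1 y ^2) + ∫ y in A, G2 y ^2)/2 := by
    rw [integral_div, integral_add hi1 hi2]
  have e1 : ∫ y in A, G1 y ^ 2 = (l2norm A G1)^2 := by
    rw [l2norm, Real.sq_sqrt (integral_nonneg (fun y => sq_nonneg _))]
  have e2 : ∫ y in A, G2 y ^ 2 = (l2norm A G2)^2 := by
    rw [l2norm, Real.sq_sqrt (integral_nonneg (fun y => sq_nonneg _))]
  have b1 : (l2norm A G1)^2 ≤ S^2 := pow_le_pow_left₀ (Real.sqrt_nonneg _) hb1 2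
  have b2 : (l2norm A G2)^2 ≤ S^2 := pow_le_pow_left₀ (Real.sqrt_nonneg _) hb2 2
  rw [hsplit, e1, e2] at hmono
  linarith [hmono, b1, b2]

theorem avg_bound {g g' n m : ℝ → ℝ} (hg : ∀ θ, HasDerivAt g (g' θ) θ)
    (hg' : Continuous g') (hn : Continuous n) (hm : Continuous m)
    (hgn : ∀ θ, |g θ| ≤ n θ) (hg'm : ∀ θ, |g' θ| ≤ m θ)
    (hnper : Function.Periodic n (2*π)) (hmper : Function.Periodic m (2*π)) (θ₀ : ℝ) :
    |g θ₀| ≤ (1/(2*π)) * (∫ θ in (-π)..π, n θ) + ∫ θ in (-π)..π, m θ := by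
  have pi_pos := Real.pi_pos
  have hmnon : ∀ θ, 0 ≤ m θ := fun θ => (abs_nonneg _).trans (hg'm θ)
  have hmint : ∀ a b : ℝ, IntervalIntegrable m MeasureTheory.volume a b :=
    fun a b => hm.intervalIntegrable a b
  have hg'int : ∀ a b : ℝ, IntervalIntegrable g' MeasureTheory.volume a b :=
    fun a b => hg'.intervalIntegrable a b
  set K₀ : ℝ := ∫ θ in (θ₀-π)..(θ₀+π), m θ with hK₀
  have key : ∀ θ ∈ Icc (θ₀-π) (θ₀+π), |g θ₀| - K₀ ≤ n θ := by
    intro θ hθ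
    have ftc : ∫ s in θ..θ₀, g' s = g θ₀ - g θ :=
      intervalIntegral.integral_eq_sub_of_hasDerivAt (fun s _ => hg s) (hg'int θ θ₀)
    have habs : |∫ s in θ..θ₀, g' s| ≤ K₀ := by
      rcases le_total θ θ₀ with h | h
      · calc |∫ s in θ..θ₀, g' s| ≤ ∫ s in θ..θ₀, |g' s| :=
              intervalIntegral.abs_integral_le_integral_abs h
          _ ≤ ∫ s in θ..θ₀, m s := by
              apply intervalIntegral.integral_mono_on h (hg'.abs.intervalIntegrable _ _) (hmint _ _)
              exact fun s _ => hg'm s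
          _ ≤ K₀ := by
              apply intervalIntegral.integral_mono_interval hθ.1 h (by linarith : θ₀ ≤ θ₀+π)
              · filter_upwards with s using hmnon s
              · exact hmint _ _
      · calc |∫ s in θ..θ₀, g' s| = |∫ s in θ₀..θ, g' s| := by
              rw [intervalIntegral.integral_symm]; exact (abs_neg _)
          _ ≤ ∫ s in θ₀..θ, |g' s| := intervalIntegral.abs_integral_le_integral_abs h
          _ ≤ ∫ s in θ₀..θ, m s := by
              apply intervalIntegral.integral_mono_on h (hg'.abs.intervalIntegrable _ _) (hmint _ _)
              exact fun s _ => hg'm s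
          _ ≤ K₀ := by
              apply intervalIntegral.integral_mono_interval (by linarith) h hθ.2
              · filter_upwards with s using hmnon s
              · exact hmint _ _
    have hh : |g θ₀| ≤ |g θ| + |∫ s in θ..θ₀, g' s| := by
      rw [ftc]
      calc |g θ₀| = |g θ + (g θ₀ - g θ)| := by ring_nf
        _ ≤ |g θ| + |g θ₀ - g θ| := abs_add_le _ _
    linarith [hgn θ]
  have hint : ∫ θ in (θ₀-π)..(θ₀+π), (|g θ₀| - K₀) ≤ ∫ θ in (θ₀-π)..(θ₀+π), n θ := by
    apply intervalIntegral.integral_mono_on (by linarith) (intervalIntegrable_const)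
      (hn.intervalIntegrable _ _)
    exact key
  rw [intervalIntegral.integral_const] at hint
  have hshift_n : ∫ θ in (θ₀-π)..(θ₀+π), n θ = ∫ θ in (-π)..π, n θ := by
    have := hnper.intervalIntegral_add_eq (θ₀-π) (-π)
    rw [show θ₀-π+2*π = θ₀+π by ring, show -π+2*π = π by ring] at this
    exact this
  have hshift_m : K₀ = ∫ θ in (-π)..π, m θ := by
    have := hmper.intervalIntegral_add_eq (θ₀-π) (-π)
    rw [show θ₀-π+2*π = θ₀+π by ring, show -π+2*π = π by ring] at this
    exact this
  rw [hshift_n] at hint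
  rw [show (θ₀+π - (θ₀-π)) = 2*π by ring] at hint
  rw [← hshift_m]
  have h2 : (2*π) * (|g θ₀| - K₀) ≤ ∫ θ in (-π)..π, n θ := by simpa [smul_eq_mul] using hint
  have h2pi : (0:ℝ) < 2*π := by linarith
  rw [div_mul_eq_mul_div, one_mul]
  have hfin : |g θ₀| - K₀ ≤ (∫ θ in (-π)..π, n θ) / (2*π) := by
    rw [le_div_iff₀ h2pi]; nlinarith [h2]
  linarith [hfin]

theorem rad2_polar (ρ θ : ℝ) (hρ : 0 ≤ ρ) : rad2 ![ρ * cos θ, ρ * sin θ] = ρ := by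
  unfold rad2
  rw [show (![ρ * cos θ, ρ * sin θ] : Fin 2 → ℝ) 0 = ρ * cos θ from rfl,
      show (![ρ * cos θ, ρ * sin θ] : Fin 2 → ℝ) 1 = ρ * sin θ from rfl]
  rw [show (ρ * cos θ)^2 + (ρ * sin θ)^2 = ρ^2 * ((sin θ)^2 + (cos θ)^2) by ring,
      Real.sin_sq_add_cos_sq, mul_one]
  exact Real.sqrt_sq hρ

theorem polar_bound {K : (Fin 2 → ℝ) → ℝ} (hK : Continuous K) (hK0 : ∀ y, 0 ≤ K y)
    {a b : ℝ} (ha : 0 < a) (hab : a ≤ b) :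
    (∫ ρ in a..b, (∫ θ in (-π)..π, K ![ρ * cos θ, ρ * sin θ])) ≤
      a⁻¹ * ∫ y in {y : Fin 2 → ℝ | a ≤ rad2 y ∧ rad2 y ≤ b}, K y := by
  have pi_pos := Real.pi_pos
  set A : Set (Fin 2 → ℝ) := {y | a ≤ rad2 y ∧ rad2 y ≤ b} with hA
  set G : ℝ × ℝ → ℝ := fun p => K ![p.1 * cos p.2, p.1 * sin p.2] with hG
  have hGc : Continuous G := by
    apply hK.comp
    apply continuous_pi
    intro i; fin_cases i
    · exact continuous_fst.mul (Real.continuous_cos.comp continuous_snd)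
    · exact continuous_fst.mul (Real.continuous_sin.comp continuous_snd)
  have hGnn : ∀ p, 0 ≤ G p := fun p => hK0 _
  set H : ℝ × ℝ → ℝ := fun p => p.1 * G p with hH
  have hHc : Continuous H := continuous_fst.mul hGc
  set S : Set (ℝ × ℝ) := Icc a b ×ˢ Ioo (-π) π with hS
  have hScpt : IsCompact (Icc a b ×ˢ Icc (-π) π) := isCompact_Icc.prod isCompact_Icc
  have hSsub : S ⊆ Icc a b ×ˢ Icc (-π) π := prod_mono subset_rfl Ioo_subset_Icc_self
  have hHS : IntegrableOn H S := (hHc.continuousOn.integrableOn_compact hScpt).mono_set hSsub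
  have hGS : IntegrableOn G S := (hGc.continuousOn.integrableOn_compact hScpt).mono_set hSsub
  -- restricted-product forms
  have hprodG : Integrable G ((volume.restrict (Icc a b)).prod (volume.restrict (Ioo (-π) π))) := by
    rw [Measure.prod_restrict]; rw [← Measure.volume_eq_prod]; exact hGS
  have hprodH : Integrable H ((volume.restrict (Icc a b)).prod (volume.restrict (Ioo (-π) π))) := by
    rw [Measure.prod_restrict]; rw [← Measure.volume_eq_prod]; exact hHS
  -- step A : iterated integrals comparison
  have hinner : ∀ ρ ∈ Icc a b,
      (∫ θ in Ioo (-π) π, G (ρ, θ)) ≤ a⁻¹ * ∫ θ in Ioo (-π) π, H (ρ, θ) := by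
    intro ρ hρ
    rw [← integral_const_mul]
    apply setIntegral_mono_on
    · exact ((hGc.comp (Continuous.prodMk_right ρ)).continuousOn.integrableOn_compact
        isCompact_Icc).mono_set Ioo_subset_Icc_self
    · exact (((continuous_const.mul (hHc.comp (Continuous.prodMk_right ρ)))).continuousOn.integrableOn_compact
        isCompact_Icc).mono_set Ioo_subset_Icc_self
    · exact measurableSet_Ioo
    · intro θ _
      have h1 : (1:ℝ) ≤ a⁻¹ * ρ := by
        rw [← div_eq_inv_mul]; rw [le_div_iff₀ ha]; simpa using hρ.1
      have := hGnn (ρ, θ)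
      calc G (ρ, θ) = 1 * G (ρ, θ) := by ring
        _ ≤ (a⁻¹ * ρ) * G (ρ, θ) := by apply mul_le_mul_of_nonneg_right h1 this
        _ = a⁻¹ * H (ρ, θ) := by rw [hH]; ring
  have hi1 : IntegrableOn (fun ρ => ∫ θ in Ioo (-π) π, G (ρ, θ)) (Icc a b) :=
    hprodG.integral_prod_left
  have hi2 : IntegrableOn (fun ρ => ∫ θ in Ioo (-π) π, H (ρ, θ)) (Icc a b) :=
    hprodH.integral_prod_left
  have hstepA : (∫ ρ in Icc a b, ∫ θ in Ioo (-π) π, G (ρ, θ)) ≤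
      a⁻¹ * ∫ ρ in Icc a b, ∫ θ in Ioo (-π) π, H (ρ, θ) := by
    rw [← integral_const_mul]
    exact setIntegral_mono_on hi1 (hi2.const_mul _) measurableSet_Icc hinner
  -- step B : Fubini
  have hSmeas : MeasurableSet S := (measurableSet_Icc.prod measurableSet_Ioo)
  have hstepB : (∫ ρ in Icc a b, ∫ θ in Ioo (-π) π, H (ρ, θ)) = ∫ p in S, H p := by
    rw [hS, Measure.volume_eq_prod, setIntegral_prod _ ?_]
    rw [← Measure.volume_eq_prod]; exact hHS
  -- the indicator function on the plane
  set A₂ : Set (ℝ × ℝ) := {q | a ≤ rad2 ![q.1, q.2] ∧ rad2 ![q.1, q.2] ≤ b} with hA₂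
  have hrcont : Continuous fun q : ℝ × ℝ => rad2 ![q.1, q.2] := by
    apply Real.continuous_sqrt.comp
    exact ((continuous_fst.pow 2).add (continuous_snd.pow 2))
  have hA₂meas : MeasurableSet A₂ := by
    have : A₂ = (fun q : ℝ × ℝ => rad2 ![q.1, q.2]) ⁻¹' (Icc a b) := by
      ext q; simp [hA₂, mem_Icc]
    rw [this]; exact (isClosed_Icc.preimage hrcont).measurableSet
  set Ψ : ℝ × ℝ → ℝ := A₂.indicator (fun q => K ![q.1, q.2]) with hΨ
  have hΨnn : ∀ q, 0 ≤ Ψ q := fun q => by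
    rw [hΨ]; exact indicator_nonneg (fun q _ => hK0 _) q
  set T : ℝ × ℝ → ℝ := fun p => p.1 • Ψ (polarCoord.symm p) with hT
  have hsymm : ∀ p : ℝ × ℝ, polarCoord.symm p = (p.1 * cos p.2, p.1 * sin p.2) := fun p => rfl
  have htarget : polarCoord.target = Ioi (0:ℝ) ×ˢ Ioo (-π) π := rfl
  have htmeas : MeasurableSet polarCoord.target := by
    rw [htarget]; exact measurableSet_Ioi.prod measurableSet_Ioo
  have hTeq : EqOn H T S := by
    intro p hp
    have hp1 : p.1 ∈ Icc a b := hp.1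
    have hrp : rad2 ![p.1 * cos p.2, p.1 * sin p.2] = p.1 :=
      rad2_polar _ _ (le_trans ha.le hp1.1)
    have hmem : (p.1 * cos p.2, p.1 * sin p.2) ∈ A₂ := by
      constructor <;> simp only [hrp] <;> [exact hp1.1; exact hp1.2]
    rw [hT, hH]
    simp only [hsymm p, hΨ, indicator_of_mem hmem, smul_eq_mul, hG]
  have hTS : IntegrableOn T S := (hHS.congr_fun hTeq hSmeas)
  have hSsubT : S ⊆ polarCoord.target := by
    rw [htarget, hS]
    exact prod_mono (fun ρ hρ => lt_of_lt_of_le ha hρ.1) subset_rfl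
  have hT0 : ∀ p ∈ polarCoord.target \ S, T p = 0 := by
    rintro p ⟨hpt, hpS⟩
    rw [htarget] at hpt
    have hp1 : 0 < p.1 := hpt.1
    have hp2 : p.2 ∈ Ioo (-π) π := hpt.2
    have : p.1 ∉ Icc a b := by
      intro hmem; exact hpS ⟨hmem, hp2⟩
    have hrp : rad2 ![p.1 * cos p.2, p.1 * sin p.2] = p.1 := rad2_polar _ _ hp1.le
    have hnm : (p.1 * cos p.2, p.1 * sin p.2) ∉ A₂ := by
      intro hmem2
      apply this
      rw [hA₂] at hmem2
      exact ⟨by rw [← hrp]; exact hmem2.1, by rw [← hrp]; exact hmem2.2⟩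
    rw [hT]
    simp only [hsymm p, hΨ, indicator_of_notMem hnm, smul_zero]
  have hTtarget : IntegrableOn T polarCoord.target := by
    have hz : IntegrableOn (fun _ : ℝ × ℝ => (0:ℝ)) (polarCoord.target \ S) volume :=
      integrableOn_zero
    have hd : IntegrableOn T (polarCoord.target \ S) :=
      hz.congr_fun (fun p hp => (hT0 p hp).symm) (htmeas.diff hSmeas)
    exact (hTS.union hd).mono_set (fun p hp => by
      by_cases hps : p ∈ S
      · exact Or.inl hps
      · exact Or.inr ⟨hp, hps⟩)
  have hTnn : 0 ≤ᵐ[volume.restrict polarCoord.target] T := by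
    apply ae_restrict_of_forall_mem htmeas
    intro p hp
    rw [htarget] at hp
    rw [hT]; simp only [smul_eq_mul]
    exact mul_nonneg (le_of_lt (mem_Ioi.mp hp.1)) (hΨnn _)
  have hstepC : (∫ p in S, T p) ≤ ∫ p in polarCoord.target, T p :=
    setIntegral_mono_set hTtarget hTnn hSsubT.eventuallyLE
  have hstepD : (∫ p in polarCoord.target, T p) = ∫ q, Ψ q :=
    integral_comp_polarCoord_symm Ψ
  have hstepE : (∫ q, Ψ q) = ∫ q in A₂, K ![q.1, q.2] := by
    rw [hΨ, integral_indicator hA₂meas]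
  have heq : (fun q : ℝ × ℝ => (![q.1, q.2] : Fin 2 → ℝ)) =
      (MeasurableEquiv.finTwoArrow : (Fin 2 → ℝ) ≃ᵐ ℝ × ℝ).symm := by
    funext q i; fin_cases i <;> rfl
  have hstepF : (∫ q in A₂, K ![q.1, q.2]) = ∫ y in A, K y := by
    have mp : MeasurePreserving
        ((MeasurableEquiv.finTwoArrow : (Fin 2 → ℝ) ≃ᵐ ℝ × ℝ).symm) volume volume :=
      (volume_preserving_finTwoArrow ℝ).symm _
    have emb : MeasurableEmbedding
        ((MeasurableEquiv.finTwoArrow : (Fin 2 → ℝ) ≃ᵐ ℝ × ℝ).symm : ℝ × ℝ → (Fin 2 → ℝ)) :=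
      (MeasurableEquiv.finTwoArrow.symm).measurableEmbedding
    have hpre : ((MeasurableEquiv.finTwoArrow : (Fin 2 → ℝ) ≃ᵐ ℝ × ℝ).symm : ℝ × ℝ → (Fin 2 → ℝ)) ⁻¹' A = A₂ := by
      ext q
      rw [hA, hA₂]
      simp only [mem_preimage, mem_setOf_eq, ← heq]
    have := mp.setIntegral_preimage_emb emb K A
    rw [hpre] at this
    rw [← this]
    apply setIntegral_congr_fun hA₂meas
    intro q _
    rw [← heq]
  -- the left-hand side as a set-iterated integral
  have hpi : -π ≤ π := by linarith
  have hLHS : (∫ ρ in a..b, (∫ θ in (-π)..π, K ![ρ * cos θ, ρ * sin θ])) =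
      ∫ ρ in Icc a b, ∫ θ in Ioo (-π) π, G (ρ, θ) := by
    rw [intervalIntegral.integral_of_le hab, ← integral_Icc_eq_integral_Ioc]
    apply setIntegral_congr_fun measurableSet_Icc
    intro ρ _
    show (∫ θ in (-π)..π, K ![ρ * cos θ, ρ * sin θ]) = ∫ θ in Ioo (-π) π, G (ρ, θ)
    rw [intervalIntegral.integral_of_le hpi, integral_Ioc_eq_integral_Ioo]
  rw [hLHS]
  calc (∫ ρ in Icc a b, ∫ θ in Ioo (-π) π, G (ρ, θ))
      ≤ a⁻¹ * ∫ ρ in Icc a b, ∫ θ in Ioo (-π) π, H (ρ, θ) := hstepA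
    _ = a⁻¹ * ∫ p in S, H p := by rw [hstepB]
    _ = a⁻¹ * ∫ p in S, T p := by
        rw [setIntegral_congr_fun hSmeas hTeq]
    _ ≤ a⁻¹ * ∫ p in polarCoord.target, T p := by
        apply mul_le_mul_of_nonneg_left hstepC (inv_nonneg.mpr ha.le)
    _ = a⁻¹ * ∫ q, Ψ q := by rw [hstepD]
    _ = a⁻¹ * ∫ q in A₂, K ![q.1, q.2] := by rw [hstepE]
    _ = a⁻¹ * ∫ y in A, K y := by rw [hstepF]


end Helpers

/-- the Klainerman–Sobolev type inequality in the exterior region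
`t/4 ≤ |x| ≤ t − 2δ`, with a boundary term at `B_t^x = (t−2δ)x/|x|`. -/
theorem statement11 :
    ∃ C > (0:ℝ), ∀ δ : ℝ, 0 < δ → δ ≤ 1 →
      ∀ f : Pt → ℝ, ContDiff ℝ (⊤ : ℕ∞) f →
      ∀ t : ℝ, 1 + 2*δ ≤ t →
      ∀ x : Fin 2 → ℝ, t/4 ≤ rad2 x → rad2 x ≤ t - 2*δ →
        |f (mkPt t x)| ≤ C * (|f (mkPt t (((t - 2*δ) / rad2 x) • x))| +
          t ^ (-(1:ℝ)/2) *
            ∑ a ∈ Finset.range 2,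
              ∑ κ ∈ ({[], [0], [1], [2]} : Finset (List (Fin 3))),
                l2norm {y : Fin 2 → ℝ | t/4 ≤ rad2 y ∧ rad2 y ≤ t - 2*δ}
                  (fun y => Omg^[a] (pdI κ f) (mkPt t y))) := by
  refine ⟨8, by norm_num, ?_⟩
  intro δ hδ0 hδ1 f hf t ht x hx1 hx2
  have pi_pos := Real.pi_pos
  have ht0 : (0:ℝ) < t := by linarith
  have ha4 : (0:ℝ) < t/4 := by linarith
  set R : ℝ := t - 2*δ with hRdef
  set r₀ : ℝ := rad2 x with hr₀def
  have hr₀pos : 0 < r₀ := lt_of_lt_of_le ha4 hx1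
  have hr₀ne : r₀ ≠ 0 := ne_of_gt hr₀pos
  have habR : t/4 ≤ R := le_trans hx1 hx2
  -- the unit direction ω = x / |x|
  set ω : Fin 2 → ℝ := r₀⁻¹ • x with hωdef
  have hω0 : ω 0 = r₀⁻¹ * x 0 := rfl
  have hω1 : ω 1 = r₀⁻¹ * x 1 := rfl
  have hx0sq : x 0 ^ 2 + x 1 ^ 2 = r₀ ^ 2 := by
    rw [hr₀def]; unfold rad2; rw [Real.sq_sqrt (by positivity)]
  have hωsq : ω 0 ^ 2 + ω 1 ^ 2 = 1 := by
    rw [hω0, hω1]; field_simp; linarith [hx0sq]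
  -- a polar angle for ω
  obtain ⟨θ₀, hcos0, hsin0⟩ : ∃ θ₀, Real.cos θ₀ = ω 0 ∧ Real.sin θ₀ = ω 1 := by
    have h1 : ‖(⟨ω 0, ω 1⟩ : ℂ)‖ = 1 := by
      rw [Complex.norm_def, Complex.normSq_mk,
        show ω 0 * ω 0 + ω 1 * ω 1 = ω 0 ^ 2 + ω 1 ^ 2 by ring, hωsq, Real.sqrt_one]
    have hz : (⟨ω 0, ω 1⟩ : ℂ) ≠ 0 := by
      intro h; rw [h] at h1; simp at h1
    refine ⟨Complex.arg ⟨ω 0, ω 1⟩, ?_, ?_⟩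
    · rw [Complex.cos_arg hz, h1]; simp
    · rw [Complex.sin_arg, h1]; simp
  -- continuity facts
  have hp1 : ContDiff ℝ (⊤:ℕ∞) (pd 1 f) := contDiff_pd hf 1
  have hp2 : ContDiff ℝ (⊤:ℕ∞) (pd 2 f) := contDiff_pd hf 2
  have hcf : Continuous f := hf.continuous
  have hc1 : Continuous (pd 1 f) := hp1.continuous
  have hc2 : Continuous (pd 2 f) := hp2.continuous
  have hcof : Continuous (Omg f) :=
    ((continuous_apply (1 : Fin 3)).mul hc2).sub ((continuous_apply (2 : Fin 3)).mul hc1)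
  have hco1 : Continuous (Omg (pd 1 f)) :=
    ((continuous_apply (1 : Fin 3)).mul (contDiff_pd hp1 2).continuous).sub
      ((continuous_apply (2 : Fin 3)).mul (contDiff_pd hp1 1).continuous)
  have hco2 : Continuous (Omg (pd 2 f)) :=
    ((continuous_apply (1 : Fin 3)).mul (contDiff_pd hp2 2).continuous).sub
      ((continuous_apply (2 : Fin 3)).mul (contDiff_pd hp2 1).continuous)
  have hmk : Continuous (mkPt t) := continuous_mkPt t
  -- the master kernel
  set Kp : (Fin 2 → ℝ) → ℝ := fun y =>
    (1/(2*π)) * (|f (mkPt t y)| * (|pd 1 f (mkPt t y)| + |pd 2 f (mkPt t y)|)) +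
    (|Omg f (mkPt t y)| * (|pd 1 f (mkPt t y)| + |pd 2 f (mkPt t y)|) +
      |f (mkPt t y)| * ((|pd 1 f (mkPt t y)| + |pd 2 f (mkPt t y)|) +
        (|Omg (pd 1 f) (mkPt t y)| + |Omg (pd 2 f) (mkPt t y)|))) with hKpdef
  have habs12 : Continuous fun y : Fin 2 → ℝ =>
      |pd 1 f (mkPt t y)| + |pd 2 f (mkPt t y)| :=
    ((hc1.comp hmk).abs).add ((hc2.comp hmk).abs)
  have hKpc : Continuous Kp := by
    rw [hKpdef]
    exact (continuous_const.mul (((hcf.comp hmk).abs).mul habs12)).add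
      ((((hcof.comp hmk).abs).mul habs12).add
        (((hcf.comp hmk).abs).mul (habs12.add
          (((hco1.comp hmk).abs).add ((hco2.comp hmk).abs)))))
  have hKp0 : ∀ y, 0 ≤ Kp y := by
    intro y; rw [hKpdef]; positivity
  -- STEP 2 : the angular average bound, for every radius ρ
  have claim2 : ∀ ρ : ℝ,
      |f (mkPt t ![ρ * ω 0, ρ * ω 1]) *
        (ω 0 * pd 1 f (mkPt t ![ρ * ω 0, ρ * ω 1]) + ω 1 * pd 2 f (mkPt t ![ρ * ω 0, ρ * ω 1]))|
        ≤ ∫ θ in (-π)..π, Kp ![ρ * Real.cos θ, ρ * Real.sin θ] := by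
    intro ρ
    set z : ℝ → Pt := fun θ => mkPt t ![ρ * Real.cos θ, ρ * Real.sin θ] with hzdef
    have hzc : Continuous z := by
      rw [hzdef]
      apply hmk.comp
      apply continuous_pi
      intro i; fin_cases i
      · show Continuous fun θ => ρ * Real.cos θ; exact continuous_const.mul Real.continuous_cos
      · show Continuous fun θ => ρ * Real.sin θ; exact continuous_const.mul Real.continuous_sin
    have hcomp : ∀ (u : Pt → ℝ), ContDiff ℝ (⊤:ℕ∞) u → ∀ θ : ℝ,
        HasDerivAt (fun θ => u (z θ)) (Omg u (z θ)) θ := by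
      intro u hu θ
      have h := curve_deriv hu t ((Real.hasDerivAt_cos θ).const_mul ρ)
        ((Real.hasDerivAt_sin θ).const_mul ρ)
      have heq : Omg u (z θ) =
          ρ * (-Real.sin θ) * pd 1 u (z θ) + ρ * Real.cos θ * pd 2 u (z θ) := by
        show (ρ * Real.cos θ) * pd 2 u (z θ) - (ρ * Real.sin θ) * pd 1 u (z θ) = _
        ring
      rw [heq]; exact h
    have hA := hcomp f hf
    have hB1 := hcomp (pd 1 f) hp1
    have hB2 := hcomp (pd 2 f) hp2
    set g : ℝ → ℝ := fun θ =>
      f (z θ) * (Real.cos θ * pd 1 f (z θ) + Real.sin θ * pd 2 f (z θ)) with hgdef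
    set g' : ℝ → ℝ := fun θ =>
      Omg f (z θ) * (Real.cos θ * pd 1 f (z θ) + Real.sin θ * pd 2 f (z θ)) +
        f (z θ) * ((-Real.sin θ) * pd 1 f (z θ) + Real.cos θ * Omg (pd 1 f) (z θ) +
          (Real.cos θ * pd 2 f (z θ) + Real.sin θ * Omg (pd 2 f) (z θ))) with hg'def
    have hgd : ∀ θ, HasDerivAt g (g' θ) θ := by
      intro θ
      exact (hA θ).mul
        (((Real.hasDerivAt_cos θ).mul (hB1 θ)).add ((Real.hasDerivAt_sin θ).mul (hB2 θ)))
    have hg'c : Continuous g' := by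
      rw [hg'def]
      fun_prop
    set nn : ℝ → ℝ := fun θ => |f (z θ)| * (|pd 1 f (z θ)| + |pd 2 f (z θ)|) with hnndef
    set mm : ℝ → ℝ := fun θ =>
      |Omg f (z θ)| * (|pd 1 f (z θ)| + |pd 2 f (z θ)|) +
        |f (z θ)| * ((|pd 1 f (z θ)| + |pd 2 f (z θ)|) +
          (|Omg (pd 1 f) (z θ)| + |Omg (pd 2 f) (z θ)|)) with hmmdef
    have hnc : Continuous nn := by rw [hnndef]; fun_prop
    have hmc : Continuous mm := by rw [hmmdef]; fun_prop
    have hgn : ∀ θ, |g θ| ≤ nn θ := by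
      intro θ
      rw [hgdef, hnndef]
      show |f (z θ) * _| ≤ _
      rw [abs_mul]
      apply mul_le_mul_of_nonneg_left _ (abs_nonneg _)
      exact abs_lin2 _ _ _ _ (Real.abs_cos_le_one θ) (Real.abs_sin_le_one θ)
    have hg'm : ∀ θ, |g' θ| ≤ mm θ := by
      intro θ
      rw [hg'def, hmmdef]
      show |Omg f (z θ) * _ + f (z θ) * _| ≤ _
      calc |Omg f (z θ) * (Real.cos θ * pd 1 f (z θ) + Real.sin θ * pd 2 f (z θ)) +
            f (z θ) * ((-Real.sin θ) * pd 1 f (z θ) + Real.cos θ * Omg (pd 1 f) (z θ) +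
              (Real.cos θ * pd 2 f (z θ) + Real.sin θ * Omg (pd 2 f) (z θ)))|
          ≤ |Omg f (z θ)| * |Real.cos θ * pd 1 f (z θ) + Real.sin θ * pd 2 f (z θ)| +
            |f (z θ)| * |(-Real.sin θ) * pd 1 f (z θ) + Real.cos θ * Omg (pd 1 f) (z θ) +
              (Real.cos θ * pd 2 f (z θ) + Real.sin θ * Omg (pd 2 f) (z θ))| := by
            calc _ ≤ |Omg f (z θ) * _| + |f (z θ) * _| := abs_add_le _ _
              _ = _ := by rw [abs_mul, abs_mul]
        _ ≤ |Omg f (z θ)| * (|pd 1 f (z θ)| + |pd 2 f (z θ)|) +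
            |f (z θ)| * ((|pd 1 f (z θ)| + |pd 2 f (z θ)|) +
              (|Omg (pd 1 f) (z θ)| + |Omg (pd 2 f) (z θ)|)) := by
            apply add_le_add
            · exact mul_le_mul_of_nonneg_left
                (abs_lin2 _ _ _ _ (Real.abs_cos_le_one θ) (Real.abs_sin_le_one θ))
                (abs_nonneg _)
            · exact mul_le_mul_of_nonneg_left
                (abs_lin4 _ _ _ _ _ _ (Real.abs_cos_le_one θ) (Real.abs_sin_le_one θ))
                (abs_nonneg _)
    have hzper : ∀ θ, z (θ + 2*π) = z θ := by
      intro θ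
      rw [hzdef]
      simp only [Real.cos_add_two_pi, Real.sin_add_two_pi]
    have hnper : Function.Periodic nn (2*π) := by
      intro θ
      rw [hnndef]
      show |f (z (θ + 2*π))| * _ = _
      rw [hzper θ]
    have hmper : Function.Periodic mm (2*π) := by
      intro θ
      rw [hmmdef]
      show |Omg f (z (θ + 2*π))| * _ + _ = _
      rw [hzper θ]
    have hbd := avg_bound hgd hg'c hnc hmc hgn hg'm hnper hmper θ₀
    have hg0 : g θ₀ = f (mkPt t ![ρ * ω 0, ρ * ω 1]) *
        (ω 0 * pd 1 f (mkPt t ![ρ * ω 0, ρ * ω 1]) + ω 1 * pd 2 f (mkPt t ![ρ * ω 0, ρ * ω 1])) := by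
      rw [hgdef]
      show f (z θ₀) * (Real.cos θ₀ * pd 1 f (z θ₀) + Real.sin θ₀ * pd 2 f (z θ₀)) = _
      have hzz : z θ₀ = mkPt t ![ρ * ω 0, ρ * ω 1] := by
        rw [hzdef]; show mkPt t _ = _; rw [hcos0, hsin0]
      rw [hzz, hcos0, hsin0]
    have hRHS : (1/(2*π)) * (∫ θ in (-π)..π, nn θ) + ∫ θ in (-π)..π, mm θ =
        ∫ θ in (-π)..π, Kp ![ρ * Real.cos θ, ρ * Real.sin θ] := by
      rw [← intervalIntegral.integral_const_mul,
        ← intervalIntegral.integral_add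
          ((hnc.intervalIntegrable _ _).const_mul _) (hmc.intervalIntegrable _ _)]
    rw [hg0, hRHS] at hbd
    exact hbd
  -- the annulus and its properties
  set A : Set (Fin 2 → ℝ) := {y | t/4 ≤ rad2 y ∧ rad2 y ≤ R} with hAdef
  have hrad2c : Continuous rad2 := by
    unfold rad2
    exact Real.continuous_sqrt.comp (((continuous_apply 0).pow 2).add ((continuous_apply 1).pow 2))
  have hAclosed : IsClosed A := by
    have : A = rad2 ⁻¹' (Icc (t/4) R) := by ext y; simp [hAdef, mem_Icc]
    rw [this]; exact isClosed_Icc.preimage hrad2c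
  have hAmeas : MeasurableSet A := hAclosed.measurableSet
  have hRnn : (0:ℝ) ≤ R := by linarith
  have hAcpt : IsCompact A := by
    apply Metric.isCompact_of_isClosed_isBounded hAclosed
    apply (Metric.isBounded_closedBall (x := (0 : Fin 2 → ℝ)) (r := R)).subset
    intro y hy
    rw [mem_closedBall_zero_iff]
    apply pi_norm_le_iff_of_nonneg hRnn |>.mpr
    intro i
    have hile : |y i| ≤ rad2 y := by
      rw [← Real.sqrt_sq_eq_abs]
      apply Real.sqrt_le_sqrt
      fin_cases i
      · simpa using (by nlinarith [sq_nonneg (y 1)] : (y 0)^2 ≤ (y 0)^2 + (y 1)^2)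
      · simpa using (by nlinarith [sq_nonneg (y 0)] : (y 1)^2 ≤ (y 0)^2 + (y 1)^2)
    calc ‖y i‖ = |y i| := rfl
      _ ≤ rad2 y := hile
      _ ≤ R := hy.2
  -- the sum of L² norms
  set Sg : ℝ := ∑ a ∈ Finset.range 2,
      ∑ κ ∈ ({[], [0], [1], [2]} : Finset (List (Fin 3))),
        l2norm A (fun y => Omg^[a] (pdI κ f) (mkPt t y)) with hSgdef
  have hterm : ∀ (a : ℕ) (κ : List (Fin 3)), a ∈ Finset.range 2 →
      κ ∈ ({[], [0], [1], [2]} : Finset (List (Fin 3))) →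
      l2norm A (fun y => Omg^[a] (pdI κ f) (mkPt t y)) ≤ Sg := by
    intro a κ haa hκ
    rw [hSgdef]
    calc l2norm A (fun y => Omg^[a] (pdI κ f) (mkPt t y))
        ≤ ∑ κ' ∈ ({[], [0], [1], [2]} : Finset (List (Fin 3))),
            l2norm A (fun y => Omg^[a] (pdI κ' f) (mkPt t y)) :=
          Finset.single_le_sum (f := fun κ' => l2norm A (fun y => Omg^[a] (pdI κ' f) (mkPt t y)))
            (fun κ' _ => Real.sqrt_nonneg _) hκ
      _ ≤ ∑ a' ∈ Finset.range 2, ∑ κ' ∈ ({[], [0], [1], [2]} : Finset (List (Fin 3))),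
            l2norm A (fun y => Omg^[a'] (pdI κ' f) (mkPt t y)) :=
          Finset.single_le_sum (f := fun a' => ∑ κ' ∈ ({[], [0], [1], [2]} : Finset (List (Fin 3))),
              l2norm A (fun y => Omg^[a'] (pdI κ' f) (mkPt t y)))
            (fun a' _ => Finset.sum_nonneg (fun κ' _ => Real.sqrt_nonneg _)) haa
  have hSgnn : 0 ≤ Sg := by
    rw [hSgdef]
    exact Finset.sum_nonneg fun a _ => Finset.sum_nonneg fun κ _ => Real.sqrt_nonneg _
  -- the six specific l2 bounds
  have hbF : l2norm A (fun y => f (mkPt t y)) ≤ Sg :=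
    hterm 0 [] (by norm_num) (by simp)
  have hbP1 : l2norm A (fun y => pd 1 f (mkPt t y)) ≤ Sg :=
    hterm 0 [1] (by norm_num) (by simp)
  have hbP2 : l2norm A (fun y => pd 2 f (mkPt t y)) ≤ Sg :=
    hterm 0 [2] (by norm_num) (by simp)
  have hbOf : l2norm A (fun y => Omg f (mkPt t y)) ≤ Sg :=
    hterm 1 [] (by norm_num) (by simp)
  have hbO1 : l2norm A (fun y => Omg (pd 1 f) (mkPt t y)) ≤ Sg :=
    hterm 1 [1] (by norm_num) (by simp)
  have hbO2 : l2norm A (fun y => Omg (pd 2 f) (mkPt t y)) ≤ Sg :=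
    hterm 1 [2] (by norm_num) (by simp)
  -- integral bound for the kernel
  have hq1 : ∫ y in A, |f (mkPt t y)| * |pd 1 f (mkPt t y)| ≤ Sg^2 :=
    l2_prod_bound hAcpt hAmeas (hcf.comp hmk) (hc1.comp hmk) hbF hbP1
  have hq2 : ∫ y in A, |f (mkPt t y)| * |pd 2 f (mkPt t y)| ≤ Sg^2 :=
    l2_prod_bound hAcpt hAmeas (hcf.comp hmk) (hc2.comp hmk) hbF hbP2
  have hq3 : ∫ y in A, |Omg f (mkPt t y)| * |pd 1 f (mkPt t y)| ≤ Sg^2 :=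
    l2_prod_bound hAcpt hAmeas (hcof.comp hmk) (hc1.comp hmk) hbOf hbP1
  have hq4 : ∫ y in A, |Omg f (mkPt t y)| * |pd 2 f (mkPt t y)| ≤ Sg^2 :=
    l2_prod_bound hAcpt hAmeas (hcof.comp hmk) (hc2.comp hmk) hbOf hbP2
  have hq5 : ∫ y in A, |f (mkPt t y)| * |Omg (pd 1 f) (mkPt t y)| ≤ Sg^2 :=
    l2_prod_bound hAcpt hAmeas (hcf.comp hmk) (hco1.comp hmk) hbF hbO1
  have hq6 : ∫ y in A, |f (mkPt t y)| * |Omg (pd 2 f) (mkPt t y)| ≤ Sg^2 :=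
    l2_prod_bound hAcpt hAmeas (hcf.comp hmk) (hco2.comp hmk) hbF hbO2
  have hKpInt : ∫ y in A, Kp y ≤ 8 * Sg^2 := by
    have hQle : ∀ y, Kp y ≤
        (|f (mkPt t y)| * |pd 1 f (mkPt t y)| + |f (mkPt t y)| * |pd 2 f (mkPt t y)|) +
        ((|Omg f (mkPt t y)| * |pd 1 f (mkPt t y)| + |Omg f (mkPt t y)| * |pd 2 f (mkPt t y)|) +
          ((|f (mkPt t y)| * |pd 1 f (mkPt t y)| + |f (mkPt t y)| * |pd 2 f (mkPt t y)|) +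
            (|f (mkPt t y)| * |Omg (pd 1 f) (mkPt t y)| + |f (mkPt t y)| * |Omg (pd 2 f) (mkPt t y)|))) := by
      intro y
      rw [hKpdef]
      have h2pi : (1/(2*π)) ≤ 1 := by
        rw [div_le_one (by linarith)]; linarith [Real.pi_gt_three]
      have hnn : 0 ≤ |f (mkPt t y)| * (|pd 1 f (mkPt t y)| + |pd 2 f (mkPt t y)|) := by positivity
      linarith [mul_le_of_le_one_left hnn h2pi]
    have hintg : ∀ (u v : Pt → ℝ), Continuous u → Continuous v →
        IntegrableOn (fun y => |u (mkPt t y)| * |v (mkPt t y)|) A := by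
      intro u v hu hv
      exact (((hu.comp hmk).abs.mul (hv.comp hmk).abs).continuousOn).integrableOn_compact hAcpt
    have i1 := hintg f (pd 1 f) hcf hc1
    have i2 := hintg f (pd 2 f) hcf hc2
    have i3 := hintg (Omg f) (pd 1 f) hcof hc1
    have i4 := hintg (Omg f) (pd 2 f) hcof hc2
    have i5 := hintg f (Omg (pd 1 f)) hcf hco1
    have i6 := hintg f (Omg (pd 2 f)) hcf hco2
    have hKpi : IntegrableOn Kp A := (hKpc.continuousOn).integrableOn_compact hAcpt
    have M : (∫ y in A, Kp y) ≤ ∫ y in A, ((|f (mkPt t y)| * |pd 1 f (mkPt t y)| + |f (mkPt t y)| * |pd 2 f (mkPt t y)|) + ((|Omg f (mkPt t y)| * |pd 1 f (mkPt t y)| + |Omg f (mkPt t y)| * |pd 2 f (mkPt t y)|) + ((|f (mkPt t y)| * |pd 1 f (mkPt t y)| + |f (mkPt t y)| * |pd 2 f (mkPt t y)|) + (|f (mkPt t y)| * |Omg (pd 1 f) (mkPt t y)| + |f (mkPt t y)| * |Omg (pd 2 f) (mkPt t y)|)))) := by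
      apply setIntegral_mono_on hKpi _ hAmeas (fun y _ => hQle y)
      exact ((i1.add i2).add ((i3.add i4).add ((i1.add i2).add (i5.add i6))))
    have E1 : (∫ y in A, (|f (mkPt t y)| * |pd 1 f (mkPt t y)| + |f (mkPt t y)| * |pd 2 f (mkPt t y)|) + ((|Omg f (mkPt t y)| * |pd 1 f (mkPt t y)| + |Omg f (mkPt t y)| * |pd 2 f (mkPt t y)|) + ((|f (mkPt t y)| * |pd 1 f (mkPt t y)| + |f (mkPt t y)| * |pd 2 f (mkPt t y)|) + (|f (mkPt t y)| * |Omg (pd 1 f) (mkPt t y)| + |f (mkPt t y)| * |Omg (pd 2 f) (mkPt t y)|)))) = (∫ y in A, (|f (mkPt t y)| * |pd 1 f (mkPt t y)| + |f (mkPt t y)| * |pd 2 f (mkPt t y)|)) + ∫ y in A, ((|Omg f (mkPt t y)| * |pd 1 f (mkPt t y)| + |Omg f (mkPt t y)| * |pd 2 f (mkPt t y)|) + ((|f (mkPt t y)| * |pd 1 f (mkPt t y)| + |f (mkPt t y)| * |pd 2 f (mkPt t y)|) + (|f (mkPt t y)| * |Omg (pd 1 f) (mkPt t y)| + |f (mkPt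 t y)| * |Omg (pd 2 f) (mkPt t y)|))) :=
      integral_add (i1.add i2) ((i3.add i4).add ((i1.add i2).add (i5.add i6)))
    have E2 : (∫ y in A, (|f (mkPt t y)| * |pd 1 f (mkPt t y)| + |f (mkPt t y)| * |pd 2 f (mkPt t y)|)) = (∫ y in A, |f (mkPt t y)| * |pd 1 f (mkPt t y)|) + ∫ y in A, |f (mkPt t y)| * |pd 2 f (mkPt t y)| := integral_add i1 i2
    have E3 : (∫ y in A, ((|Omg f (mkPt t y)| * |pd 1 f (mkPt t y)| + |Omg f (mkPt t y)| * |pd 2 f (mkPt t y)|) + ((|f (mkPt t y)| * |pd 1 f (mkPt t y)| + |f (mkPt t y)| * |pd 2 f (mkPt t y)|) + (|f (mkPt t y)| * |Omg (pd 1 f) (mkPt t y)| + |f (mkPt t y)| * |Omg (pd 2 f) (mkPt t y)|)))) = (∫ y in A, (|Omg f (mkPt t y)| * |pd 1 f (mkPt t y)| + |Omg f (mkPt t y)| * |pd 2 f (mkPt t y)|)) + ∫ y in A, ((|f (mkPt t y)| * |pd 1 f (mkPt t y)| + |f (mkPt t y)| * |pd 2 f (mkPt t y)|) + (|f (mkPt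 t y)| * |Omg (pd 1 f) (mkPt t y)| + |f (mkPt t y)| * |Omg (pd 2 f) (mkPt t y)|)) :=
      integral_add (i3.add i4) ((i1.add i2).add (i5.add i6))
    have E4 : (∫ y in A, (|Omg f (mkPt t y)| * |pd 1 f (mkPt t y)| + |Omg f (mkPt t y)| * |pd 2 f (mkPt t y)|)) = (∫ y in A, |Omg f (mkPt t y)| * |pd 1 f (mkPt t y)|) + ∫ y in A, |Omg f (mkPt t y)| * |pd 2 f (mkPt t y)| := integral_add i3 i4
    have E5 : (∫ y in A, ((|f (mkPt t y)| * |pd 1 f (mkPt t y)| + |f (mkPt t y)| * |pd 2 f (mkPt t y)|) + (|f (mkPt t y)| * |Omg (pd 1 f) (mkPt t y)| + |f (mkPt t y)| * |Omg (pd 2 f) (mkPt t y)|))) = (∫ y in A, (|f (mkPt t y)| * |pd 1 f (mkPt t y)| + |f (mkPt t y)| * |pd 2 f (mkPt t y)|)) + ∫ y in A, (|f (mkPt t y)| * |Omg (pd 1 f) (mkPt t y)| + |f (mkPt t y)| * |Omg (pd 2 f) (mkPt t y)|) := integral_add (i1.add i2) (i5.add i6)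
    have E6 : (∫ y in A, (|f (mkPt t y)| * |Omg (pd 1 f) (mkPt t y)| + |f (mkPt t y)| * |Omg (pd 2 f) (mkPt t y)|)) = (∫ y in A, |f (mkPt t y)| * |Omg (pd 1 f) (mkPt t y)|) + ∫ y in A, |f (mkPt t y)| * |Omg (pd 2 f) (mkPt t y)| := integral_add i5 i6
    linarith [M, E1, E2, E3, E4, E5, E6, hq1, hq2, hq3, hq4, hq5, hq6]
  -- STEP 1 : radial FTC
  set c : ℝ → Pt := fun s => mkPt t ![s * ω 0, s * ω 1] with hcdef
  have hcc : Continuous c := by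
    rw [hcdef]
    apply hmk.comp
    apply continuous_pi
    intro i; fin_cases i
    · show Continuous fun s => s * ω 0; exact continuous_id.mul continuous_const
    · show Continuous fun s => s * ω 1; exact continuous_id.mul continuous_const
  set ff : ℝ → ℝ := fun s => f (c s) with hffdef
  set ff' : ℝ → ℝ := fun s => ω 0 * pd 1 f (c s) + ω 1 * pd 2 f (c s) with hff'def
  have hffd : ∀ s, HasDerivAt ff (ff' s) s := fun s =>
    curve_deriv hf t (hasDerivAt_mul_const (ω 0)) (hasDerivAt_mul_const (ω 1))
  have hffc : Continuous ff := hcf.comp hcc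
  have hff'c : Continuous ff' := by
    rw [hff'def]
    exact (continuous_const.mul (hc1.comp hcc)).add (continuous_const.mul (hc2.comp hcc))
  have hHd : ∀ s, HasDerivAt (fun s => ff s ^ 2) (2 * ff s * ff' s) s := by
    intro s
    have h := (hffd s).pow 2
    norm_num at h
    exact h
  have hftc : ∫ s in r₀..R, (2 * ff s * ff' s) = ff R ^ 2 - ff r₀ ^ 2 :=
    intervalIntegral.integral_eq_sub_of_hasDerivAt (fun s _ => hHd s)
      (((continuous_const.mul hffc).mul hff'c).intervalIntegrable _ _)
  -- Φ and its properties
  set Φ : ℝ → ℝ := fun ρ => ∫ θ in (-π)..π, Kp ![ρ * Real.cos θ, ρ * Real.sin θ] with hΦdef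
  have hΦc : Continuous Φ := by
    rw [hΦdef]
    apply intervalIntegral.continuous_parametric_intervalIntegral_of_continuous'
    apply hKpc.comp
    apply continuous_pi
    intro i; fin_cases i
    · show Continuous fun p : ℝ × ℝ => p.1 * Real.cos p.2
      exact continuous_fst.mul (Real.continuous_cos.comp continuous_snd)
    · show Continuous fun p : ℝ × ℝ => p.1 * Real.sin p.2
      exact continuous_fst.mul (Real.continuous_sin.comp continuous_snd)
  have hΦ0 : ∀ ρ, 0 ≤ Φ ρ := by
    intro ρ
    rw [hΦdef]
    apply intervalIntegral.integral_nonneg (by linarith)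
    intro θ _
    exact hKp0 _
  have hr₀R : r₀ ≤ R := hx2
  have hstep1 : ff r₀ ^ 2 ≤ ff R ^ 2 + ∫ s in r₀..R, |2 * ff s * ff' s| := by
    have he : ff r₀ ^ 2 = ff R ^ 2 - ∫ s in r₀..R, 2 * ff s * ff' s := by
      rw [hftc]; ring
    rw [he]
    have habs : |∫ s in r₀..R, 2 * ff s * ff' s| ≤ ∫ s in r₀..R, |2 * ff s * ff' s| :=
      intervalIntegral.abs_integral_le_integral_abs hr₀R
    linarith [neg_abs_le (∫ s in r₀..R, 2 * ff s * ff' s)]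
  have hstep2 : ∫ s in r₀..R, |2 * ff s * ff' s| ≤ ∫ s in r₀..R, 2 * Φ s := by
    apply intervalIntegral.integral_mono_on hr₀R
      ((((continuous_const.mul hffc).mul hff'c).abs).intervalIntegrable _ _)
      ((continuous_const.mul hΦc).intervalIntegrable _ _)
    intro s _
    have h := claim2 s
    calc |2 * ff s * ff' s| = 2 * |ff s * ff' s| := by
          rw [show (2:ℝ) * ff s * ff' s = 2 * (ff s * ff' s) by ring, abs_mul, abs_two]
      _ ≤ 2 * Φ s := by
          apply mul_le_mul_of_nonneg_left _ (by norm_num)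
          rw [hΦdef]
          exact h
  have hstep3 : ∫ s in r₀..R, 2 * Φ s ≤ ∫ s in (t/4)..R, 2 * Φ s := by
    apply intervalIntegral.integral_mono_interval hx1 hr₀R le_rfl
    · filter_upwards with s
      have := hΦ0 s; positivity
    · exact (continuous_const.mul hΦc).intervalIntegrable _ _
  have hstep4 : ∫ s in (t/4)..R, 2 * Φ s = 2 * ∫ s in (t/4)..R, Φ s :=
    intervalIntegral.integral_const_mul 2 Φ
  have hstep5 : ∫ s in (t/4)..R, Φ s ≤ (t/4)⁻¹ * ∫ y in A, Kp y := by
    rw [hΦdef]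
    exact polar_bound hKpc hKp0 ha4 habR
  have hmain : ff r₀ ^ 2 ≤ ff R ^ 2 + (64 / t) * Sg ^ 2 := by
    have h1 : (t/4)⁻¹ * ∫ y in A, Kp y ≤ (t/4)⁻¹ * (8 * Sg^2) :=
      mul_le_mul_of_nonneg_left hKpInt (by positivity)
    have h2 : (t/4)⁻¹ * (8 * Sg^2) = (32/t) * Sg^2 := by
      field_simp; ring
    calc ff r₀^2 ≤ ff R^2 + ∫ s in r₀..R, |2 * ff s * ff' s| := hstep1
      _ ≤ ff R^2 + ∫ s in r₀..R, 2 * Φ s := by linarith [hstep2]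
      _ ≤ ff R^2 + ∫ s in (t/4)..R, 2 * Φ s := by linarith [hstep3]
      _ = ff R^2 + 2 * ∫ s in (t/4)..R, Φ s := by rw [hstep4]
      _ ≤ ff R^2 + 2 * ((t/4)⁻¹ * ∫ y in A, Kp y) := by linarith [hstep5]
      _ ≤ ff R^2 + 2 * ((t/4)⁻¹ * (8 * Sg^2)) := by linarith [h1]
      _ = ff R^2 + (64 / t) * Sg^2 := by rw [h2]; ring
  -- endpoints
  have hvec : (![r₀ * ω 0, r₀ * ω 1] : Fin 2 → ℝ) = x := by
    funext i; fin_cases i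
    · show r₀ * (r₀⁻¹ * x 0) = x 0; field_simp
    · show r₀ * (r₀⁻¹ * x 1) = x 1; field_simp
  have hvecR : (![R * ω 0, R * ω 1] : Fin 2 → ℝ) = (R / rad2 x) • x := by
    funext i; fin_cases i
    · show R * (r₀⁻¹ * x 0) = (R / r₀) * x 0; rw [div_eq_mul_inv]; ring
    · show R * (r₀⁻¹ * x 1) = (R / r₀) * x 1; rw [div_eq_mul_inv]; ring
  have hcr₀ : c r₀ = mkPt t x := by
    rw [hcdef]
    show mkPt t ![r₀ * ω 0, r₀ * ω 1] = mkPt t x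
    rw [hvec]
  have hcR : c R = mkPt t ((R / rad2 x) • x) := by
    rw [hcdef]
    show mkPt t ![R * ω 0, R * ω 1] = mkPt t ((R / rad2 x) • x)
    rw [hvecR]
  -- final algebra
  have hrpow : t ^ (-(1:ℝ)/2) = (Real.sqrt t)⁻¹ := by
    rw [show (-(1:ℝ)/2) = -(1/2 : ℝ) by norm_num, Real.rpow_neg ht0.le, ← Real.sqrt_eq_rpow]
  have hsq : Real.sqrt ((64 / t) * Sg ^ 2) = 8 * (t ^ (-(1:ℝ)/2) * Sg) := by
    rw [show (64 / t) * Sg ^ 2 = (8*Sg)^2 / t by ring, Real.sqrt_div (sq_nonneg _) t,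
      Real.sqrt_sq (by positivity : (0:ℝ) ≤ 8*Sg), hrpow, div_eq_mul_inv]
    ring
  have hfin1 : |f (mkPt t x)| ≤ |f (mkPt t ((R / rad2 x) • x))| + 8 * (t ^ (-(1:ℝ)/2) * Sg) := by
    have e0 : |f (mkPt t x)| = Real.sqrt (ff r₀ ^ 2) := by
      rw [Real.sqrt_sq_eq_abs, hffdef]
      show _ = |f (c r₀)|
      rw [hcr₀]
    have eB : Real.sqrt (ff R ^ 2) = |f (mkPt t ((R / rad2 x) • x))| := by
      rw [Real.sqrt_sq_eq_abs, hffdef]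
      show |f (c R)| = _
      rw [hcR]
    rw [e0]
    calc Real.sqrt (ff r₀ ^ 2) ≤ Real.sqrt (ff R ^ 2 + (64 / t) * Sg ^ 2) :=
          Real.sqrt_le_sqrt hmain
      _ ≤ Real.sqrt (ff R ^ 2) + Real.sqrt ((64 / t) * Sg ^ 2) :=
          my_sqrt_add_le (sq_nonneg _) (by positivity)
      _ = |f (mkPt t ((R / rad2 x) • x))| + 8 * (t ^ (-(1:ℝ)/2) * Sg) := by rw [eB, hsq]
  have hpownn : 0 ≤ t ^ (-(1:ℝ)/2) := Real.rpow_nonneg ht0.le _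
  calc |f (mkPt t x)| ≤ |f (mkPt t ((R / rad2 x) • x))| + 8 * (t ^ (-(1:ℝ)/2) * Sg) := hfin1
    _ ≤ 8 * (|f (mkPt t ((R / rad2 x) • x))| + t ^ (-(1:ℝ)/2) * Sg) := by
        linarith [abs_nonneg (f (mkPt t ((R / rad2 x) • x))), mul_nonneg hpownn hSgnn]


end
end

section
/- There exists a constant C > 0 with the following property: for every δ ∈ (0,1], every f ∈ C^∞(ℝ×ℝ²), every t ≥ 1+2δ and every t̄ with 1 ≤ t̄ ≤ t − 2δ, one has ( ∫_{t̄ ≤ |x| ≤ t−2δ} |f(t,x)|² / (1 + t − |x|)² dx )^{1/2} ≤ C ( t^{1/2} sup_{ω ∈ S¹} |f(t, (t−2δ)ω)| + ‖∂f(t,·)‖_{L²({x : t̄ ≤ |x| ≤ t−2δ})} ). -/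
noncomputable section

open Real Set MeasureTheory

/-! ### Auxiliary lemmas for statement12 -/

open intervalIntegral in
lemma s12_hardy1d (t T tbar : ℝ) (htbar : 1 ≤ tbar) (hT : tbar ≤ T) (hTt : T < 1 + t)
    (h h' : ℝ → ℝ) (hd : ∀ r, HasDerivAt h (h' r) r)
    (hc : Continuous h) (hc' : Continuous h') :
    ∫ r in tbar..T, r * (h r)^2 / (1+t-r)^2
      ≤ 2 * (T * (h T)^2 / (1+t-T)) + 4 * ∫ r in tbar..T, r * (h' r)^2 := by
  have hw : ∀ r ∈ Set.uIcc tbar T, (0:ℝ) < 1 + t - r := by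
    intro r hr
    rw [Set.uIcc_of_le hT] at hr
    linarith [hr.2]
  have hwne : ∀ r ∈ Set.uIcc tbar T, (1 + t - r) ≠ 0 := fun r hr => (hw r hr).ne'
  have hcw : ContinuousOn (fun r => 1 + t - r) (Set.uIcc tbar T) := by fun_prop
  have int1 : IntervalIntegrable (fun r => r * (h r)^2 / (1+t-r)^2) volume tbar T := by
    apply ContinuousOn.intervalIntegrable
    exact (continuousOn_id.mul ((hc.continuousOn).pow 2)).div (hcw.pow 2)
      (fun r hr => pow_ne_zero 2 (hwne r hr))
  have int2 : IntervalIntegrable (fun r => (h r)^2 / (1+t-r)) volume tbar T := by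
    apply ContinuousOn.intervalIntegrable
    exact ((hc.continuousOn).pow 2).div hcw hwne
  have int3 : IntervalIntegrable (fun r => 2*r*(h r)*(h' r) / (1+t-r)) volume tbar T := by
    apply ContinuousOn.intervalIntegrable
    exact ((((continuousOn_const.mul continuousOn_id).mul hc.continuousOn).mul
      hc'.continuousOn)).div hcw hwne
  have int4 : IntervalIntegrable (fun r => r * (h' r)^2) volume tbar T := by
    apply ContinuousOn.intervalIntegrable
    exact continuousOn_id.mul ((hc'.continuousOn).pow 2)
  have hftc : (∫ r in tbar..T, ((h r)^2 / (1+t-r) + 2*r*(h r)*(h' r) / (1+t-r)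
        + r * (h r)^2 / (1+t-r)^2))
      = T * (h T)^2 / (1+t-T) - tbar * (h tbar)^2 / (1+t-tbar) := by
    apply intervalIntegral.integral_eq_sub_of_hasDerivAt
    · intro r hr
      have hwr := hw r hr
      have hd1 : HasDerivAt (fun r => r * (h r)^2) ((h r)^2 + r * (2 * h r * h' r)) r := by
        simpa using (hasDerivAt_id' r).fun_mul (((hd r).fun_pow 2))
      have hd2 : HasDerivAt (fun r => 1 + t - r) (-1) r := by
        simpa using ((hasDerivAt_id r).const_sub (1+t))
      have := hd1.fun_div hd2 hwr.ne'
      refine this.congr_deriv ?_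
      field_simp
      ring
    · exact (int2.add int3).add int1
  have hsplit : (∫ r in tbar..T, ((h r)^2 / (1+t-r) + 2*r*(h r)*(h' r) / (1+t-r)
        + r * (h r)^2 / (1+t-r)^2))
      = (∫ r in tbar..T, (h r)^2 / (1+t-r)) + (∫ r in tbar..T, 2*r*(h r)*(h' r) / (1+t-r))
        + ∫ r in tbar..T, r * (h r)^2 / (1+t-r)^2 := by
    rw [intervalIntegral.integral_add (int2.add int3) int1,
      intervalIntegral.integral_add int2 int3]
  have hK : 0 ≤ ∫ r in tbar..T, (h r)^2 / (1+t-r) := by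
    apply intervalIntegral.integral_nonneg hT
    intro r hr
    have : (0:ℝ) < 1 + t - r := hw r (by rw [Set.uIcc_of_le hT]; exact hr)
    positivity
  have hL : -(∫ r in tbar..T, 2*r*(h r)*(h' r) / (1+t-r))
      ≤ (∫ r in tbar..T, r * (h r)^2 / (1+t-r)^2)/2 + 2 * ∫ r in tbar..T, r * (h' r)^2 := by
    rw [← intervalIntegral.integral_neg]
    have : (∫ r in tbar..T, r * (h r)^2 / (1+t-r)^2)/2 + 2 * ∫ r in tbar..T, r * (h' r)^2
        = ∫ r in tbar..T, (r * (h r)^2 / (1+t-r)^2 / 2 + 2 * (r * (h' r)^2)) := by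
      rw [intervalIntegral.integral_add (int1.div_const 2) (int4.const_mul 2),
        intervalIntegral.integral_div, intervalIntegral.integral_const_mul]
    rw [this]
    apply intervalIntegral.integral_mono_on hT int3.neg
      ((int1.div_const 2).add (int4.const_mul 2))
    intro r hr
    have hwr : (0:ℝ) < 1 + t - r := hw r (by rw [Set.uIcc_of_le hT]; exact Set.mem_Icc.2 hr)
    have hr0 : (0:ℝ) < r := by linarith [hr.1]
    set a := h r; set b := h' r; set w := 1 + t - r
    have key : 0 ≤ r * (a/w + 2*b)^2 := by positivity
    have e1 : r * a^2 / w^2 = r * (a/w)^2 := by field_simp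
    have e2 : 2*r*a*b/w = 2*r*(a/w)*b := by
      field_simp
    simp only [Pi.neg_apply]
    rw [e1, e2]
    nlinarith [key]
  have hub : 0 ≤ tbar * (h tbar)^2 / (1+t-tbar) := by
    have hwtb : (0:ℝ) < 1 + t - tbar := by linarith
    positivity
  linarith [hftc, hsplit, hK, hL]

/-- The measurable equivalence `(Fin 2 → ℝ) ≃ᵐ ℝ × ℝ`. -/
noncomputable def s12e : (Fin 2 → ℝ) ≃ᵐ ℝ × ℝ := MeasurableEquiv.finTwoArrow

lemma s12e_symm (p : ℝ × ℝ) : s12e.symm p = ![p.1, p.2] := by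
  simp only [s12e, MeasurableEquiv.finTwoArrow]
  ext i
  fin_cases i <;> simp

lemma s12_polar (F : (Fin 2 → ℝ) → ℝ) (A : Set (Fin 2 → ℝ)) (hA : MeasurableSet A) :
    ∫ y in A, F y = ∫ p in polarCoord.target,
      p.1 * A.indicator F (s12e.symm (polarCoord.symm p)) := by
  rw [← integral_indicator hA]
  rw [← ((MeasureTheory.volume_preserving_finTwoArrow ℝ).symm s12e).integral_comp
        s12e.symm.measurableEmbedding (A.indicator F)]
  rw [← integral_comp_polarCoord_symm (fun p => A.indicator F (s12e.symm p))]
  simp [smul_eq_mul]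

lemma s12_restrict_prod (s u : Set ℝ) :
    (volume : Measure (ℝ × ℝ)).restrict (s ×ˢ u)
      = (volume.restrict s).prod (volume.restrict u) := by
  rw [Measure.prod_restrict, ← Measure.volume_eq_prod]

lemma s12_prod_symm (f : ℝ × ℝ → ℝ) (s u : Set ℝ) (hf : IntegrableOn f (s ×ˢ u) volume) :
    ∫ z in s ×ˢ u, f z = ∫ y in u, ∫ x in s, f (x, y) := by
  rw [IntegrableOn, s12_restrict_prod] at hf
  rw [show (∫ z in s ×ˢ u, f z) = ∫ z, f z ∂((volume.restrict s).prod (volume.restrict u)) by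
    rw [← s12_restrict_prod]]
  exact MeasureTheory.integral_prod_symm f hf

lemma s12_vec (r θ : ℝ) :
    s12e.symm (polarCoord.symm (r, θ)) = r • ![Real.cos θ, Real.sin θ] := by
  rw [show (polarCoord.symm (r, θ) : ℝ × ℝ) = (r * Real.cos θ, r * Real.sin θ) from rfl,
    s12e_symm]
  ext i
  fin_cases i <;> simp

lemma s12_unit (θ : ℝ) : rad2 ![Real.cos θ, Real.sin θ] = 1 := by
  simp only [rad2, Matrix.cons_val_zero, Matrix.cons_val_one, Matrix.head_cons]
  rw [show Real.cos θ ^ 2 + Real.sin θ ^ 2 = 1 from Real.cos_sq_add_sin_sq θ]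
  exact Real.sqrt_one

lemma s12_sq (ω : Fin 2 → ℝ) (hω : rad2 ω = 1) : (ω 0)^2 + (ω 1)^2 = 1 :=
  Real.sqrt_eq_one.mp hω

lemma s12_rad2_smul (r : ℝ) (hr : 0 ≤ r) (ω : Fin 2 → ℝ) (hω : rad2 ω = 1) :
    rad2 (r • ω) = r := by
  have h1 := s12_sq ω hω
  simp only [rad2, Pi.smul_apply, smul_eq_mul]
  rw [show (r * ω 0) ^ 2 + (r * ω 1) ^ 2 = r^2 * ((ω 0)^2 + (ω 1)^2) by ring, h1, mul_one,
    Real.sqrt_sq hr]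

lemma s12_rad2_cont : Continuous rad2 := by
  have : Continuous fun y : Fin 2 → ℝ => (y 0)^2 + (y 1)^2 := by fun_prop
  exact Real.continuous_sqrt.comp this

lemma s12_mk_cont (t : ℝ) : Continuous (fun y : Fin 2 → ℝ => mkPt t y) := by
  apply continuous_pi
  intro i
  refine Fin.cases ?_ ?_ i
  · simpa [mkPt] using continuous_const
  · intro j
    simpa [mkPt] using continuous_apply j

lemma s12_pd_cont (f : Pt → ℝ) (hf : ContDiff ℝ (⊤ : ℕ∞) f) (α : Fin 3) :
    Continuous (pd α f) := by
  have h1 : Continuous (fderiv ℝ f) := hf.continuous_fderiv (by simp)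
  exact h1.clm_apply continuous_const

lemma s12_gradSq_cont (f : Pt → ℝ) (hf : ContDiff ℝ (⊤ : ℕ∞) f) :
    Continuous (gradSq f) := by
  unfold gradSq
  exact continuous_finset_sum _ fun α _ => (s12_pd_cont f hf α).pow 2

lemma s12_cons_eq (ω : Fin 2 → ℝ) :
    (Fin.cons 0 ω : Pt) = ω 0 • (Pi.single 1 1 : Pt) + ω 1 • (Pi.single 2 1 : Pt) := by
  ext i
  fin_cases i <;> simp [Pi.single_apply] <;> rfl

lemma s12_curve (t : ℝ) (ω : Fin 2 → ℝ) (r : ℝ) :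
    mkPt t (r • ω) = (Fin.cons t 0 : Pt) + r • (Fin.cons 0 ω : Pt) := by
  ext i
  refine Fin.cases ?_ ?_ i
  · simp [mkPt]
  · intro j
    simp [mkPt]

lemma s12_hasDeriv (f : Pt → ℝ) (hf : ContDiff ℝ (⊤ : ℕ∞) f) (t : ℝ) (ω : Fin 2 → ℝ)
    (r : ℝ) :
    HasDerivAt (fun r : ℝ => f (mkPt t (r • ω)))
      (fderiv ℝ f (mkPt t (r • ω)) (Fin.cons 0 ω)) r := by
  have hc : HasDerivAt (fun r : ℝ => mkPt t (r • ω)) (Fin.cons 0 ω : Pt) r := by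
    have : HasDerivAt (fun r : ℝ => (Fin.cons t 0 : Pt) + r • (Fin.cons 0 ω : Pt))
        (Fin.cons 0 ω : Pt) r := by
      simpa using ((hasDerivAt_id r).smul_const (Fin.cons 0 ω : Pt)).const_add
        (Fin.cons t 0 : Pt)
    convert this using 1
    funext s
    exact s12_curve t ω s
  have hF : HasFDerivAt f (fderiv ℝ f (mkPt t (r • ω))) (mkPt t (r • ω)) :=
    (hf.differentiable (by simp) (mkPt t (r • ω))).hasFDerivAt
  exact hF.comp_hasDerivAt r hc

lemma s12_deriv_sq_le (f : Pt → ℝ) (ω : Fin 2 → ℝ) (hω : rad2 ω = 1) (x : Pt) :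
    (fderiv ℝ f x (Fin.cons 0 ω))^2 ≤ gradSq f x := by
  have h1 := s12_sq ω hω
  have h2 : fderiv ℝ f x (Fin.cons 0 ω)
      = ω 0 * pd 1 f x + ω 1 * pd 2 f x := by
    rw [s12_cons_eq, map_add, (fderiv ℝ f x).map_smul, (fderiv ℝ f x).map_smul]
    simp [pd, smul_eq_mul]
  rw [h2]
  have h3 : gradSq f x = (pd 0 f x)^2 + (pd 1 f x)^2 + (pd 2 f x)^2 := by
    simp [gradSq, Fin.sum_univ_three]
  rw [h3]
  nlinarith [sq_nonneg (ω 0 * pd 2 f x - ω 1 * pd 1 f x), sq_nonneg (pd 0 f x)]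

set_option maxHeartbeats 1000000 in
/-- the weighted `L²` Hardy-type inequality
`‖f/(1+t−|·|)‖_{L²(t̄≤|x|≤t−2δ)} ≤ C(t^{1/2} sup_{S¹}|f(t,(t−2δ)ω)| + ‖∂f‖_{L²})`. -/
theorem statement12 :
    ∃ C > (0:ℝ), ∀ δ : ℝ, 0 < δ → δ ≤ 1 →
      ∀ f : Pt → ℝ, ContDiff ℝ (⊤ : ℕ∞) f →
      ∀ t : ℝ, 1 + 2*δ ≤ t → ∀ tbar : ℝ, 1 ≤ tbar → tbar ≤ t - 2*δ →
        Real.sqrt (∫ y in {y : Fin 2 → ℝ | tbar ≤ rad2 y ∧ rad2 y ≤ t - 2*δ},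
            (f (mkPt t y)) ^ 2 / (1 + t - rad2 y) ^ 2)
        ≤ C * (t ^ ((1:ℝ)/2) *
            (⨆ ω : {ω : Fin 2 → ℝ // rad2 ω = 1},
              |f (mkPt t ((t - 2*δ) • (ω : Fin 2 → ℝ)))|) +
          Real.sqrt (∫ y in {y : Fin 2 → ℝ | tbar ≤ rad2 y ∧ rad2 y ≤ t - 2*δ},
            gradSq f (mkPt t y))) := by
  refine ⟨4, by norm_num, ?_⟩
  intro δ hδ0 hδ1 f hf t ht tbar htb1 htb2
  set T := t - 2*δ with hTdef
  set A : Set (Fin 2 → ℝ) := {y : Fin 2 → ℝ | tbar ≤ rad2 y ∧ rad2 y ≤ T} with hAdef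
  set M : ℝ := ⨆ ω : {ω : Fin 2 → ℝ // rad2 ω = 1},
      |f (mkPt t (T • (ω : Fin 2 → ℝ)))| with hMdef
  have hT1 : 1 ≤ T := le_trans htb1 htb2
  have hT0 : 0 < T := by linarith
  have htT : T < 1 + t := by simp only [hTdef]; linarith
  have ht0 : (0:ℝ) < t := by linarith
  -- measurability and compactness of A
  have hAclosed : IsClosed A := by
    have : A = rad2 ⁻¹' (Set.Icc tbar T) := rfl
    rw [this]
    exact (isClosed_Icc).preimage s12_rad2_cont
  have hAmeas : MeasurableSet A := hAclosed.measurableSet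
  have hradle : ∀ y : Fin 2 → ℝ, ∀ i, |y i| ≤ rad2 y := by
    intro y i
    have key : ∀ a b : ℝ, |a| ≤ Real.sqrt (a^2+b^2) := fun a b => by
      rw [← Real.sqrt_sq_eq_abs]
      exact Real.sqrt_le_sqrt (by nlinarith [sq_nonneg b])
    refine Fin.cases ?_ ?_ i
    · simpa [rad2] using key (y 0) (y 1)
    · intro j
      rw [Fin.fin_one_eq_zero j]
      simpa [rad2, add_comm] using key (y 1) (y 0)
  have hAcompact : IsCompact A := by
    apply Metric.isCompact_of_isClosed_isBounded hAclosed
    rw [isBounded_iff_forall_norm_le]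
    refine ⟨T, fun y hy => ?_⟩
    rw [pi_norm_le_iff_of_nonneg hT0.le]
    intro i
    calc ‖y i‖ = |y i| := rfl
    _ ≤ rad2 y := hradle y i
    _ ≤ T := hy.2
  -- the two spatial integrands
  set F1 : (Fin 2 → ℝ) → ℝ := fun y => (f (mkPt t y)) ^ 2 / (1 + t - rad2 y) ^ 2 with hF1def
  set F2 : (Fin 2 → ℝ) → ℝ := fun y => gradSq f (mkPt t y) with hF2def
  have hfm : Continuous (fun y : Fin 2 → ℝ => f (mkPt t y)) := hf.continuous.comp (s12_mk_cont t)
  have hF1meas : Measurable F1 := by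
    apply Measurable.div
    · exact ((hfm.pow 2)).measurable
    · exact (((continuous_const.sub s12_rad2_cont).pow 2)).measurable
  have hF2cont : Continuous F2 := (s12_gradSq_cont f hf).comp (s12_mk_cont t)
  have hF2meas : Measurable F2 := hF2cont.measurable
  have hdenom : ∀ y ∈ A, (0:ℝ) < 1 + t - rad2 y := by
    intro y hy
    have := hy.2
    simp only [hTdef] at this
    linarith
  have hF1contOn : ContinuousOn F1 A := by
    apply ContinuousOn.div (hfm.continuousOn.pow 2)
      ((continuous_const.sub s12_rad2_cont).continuousOn.pow 2)
    intro y hy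
    exact pow_ne_zero 2 (hdenom y hy).ne'
  obtain ⟨C1, hC1⟩ := hAcompact.exists_bound_of_continuousOn hF1contOn
  obtain ⟨C2, hC2⟩ := hAcompact.exists_bound_of_continuousOn hF2cont.continuousOn
  set C0 : ℝ := max C1 (max C2 0) with hC0def
  have hC0nonneg : 0 ≤ C0 := le_trans (le_max_right C2 0) (le_max_right C1 _)
  have hbF1 : ∀ y ∈ A, |F1 y| ≤ C0 := fun y hy => le_trans (hC1 y hy) (le_max_left _ _)
  have hbF2 : ∀ y ∈ A, |F2 y| ≤ C0 := fun y hy =>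
    le_trans (hC2 y hy) (le_trans (le_max_left C2 0) (le_max_right C1 _))
  -- the polar integrands
  set Φ1 : ℝ × ℝ → ℝ := fun p => p.1 * A.indicator F1 (s12e.symm (polarCoord.symm p))
    with hΦ1def
  set Φ2 : ℝ × ℝ → ℝ := fun p => p.1 * A.indicator F2 (s12e.symm (polarCoord.symm p))
    with hΦ2def
  have hpsymm : Continuous (fun p : ℝ × ℝ => (polarCoord.symm p : ℝ × ℝ)) := by
    have : (fun p : ℝ × ℝ => (polarCoord.symm p : ℝ × ℝ))
        = fun p : ℝ × ℝ => (p.1 * Real.cos p.2, p.1 * Real.sin p.2) := rfl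
    rw [this]; fun_prop
  have hΦmeas : ∀ (F : (Fin 2 → ℝ) → ℝ), Measurable F →
      Measurable (fun p : ℝ × ℝ => p.1 * A.indicator F (s12e.symm (polarCoord.symm p))) := by
    intro F hFm
    exact measurable_fst.mul ((hFm.indicator hAmeas).comp
      (s12e.symm.measurable.comp hpsymm.measurable))
  -- integrability over the polar rectangle
  have hIntOn : ∀ (F : (Fin 2 → ℝ) → ℝ), Measurable F → (∀ y ∈ A, |F y| ≤ C0) →
      IntegrableOn (fun p : ℝ × ℝ => p.1 * A.indicator F (s12e.symm (polarCoord.symm p)))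
        (Set.Ioi (0:ℝ) ×ˢ Set.Ioo (-π) π) volume := by
    intro F hFm hFb
    have hrectmeas : MeasurableSet (Set.Icc tbar T ×ˢ Set.Icc (-π) π) :=
      measurableSet_Icc.prod measurableSet_Icc
    apply Integrable.mono'
      (g := (Set.Icc tbar T ×ˢ Set.Icc (-π) π).indicator (fun _ => T * C0))
    · apply Integrable.restrict
      rw [integrable_indicator_iff hrectmeas]
      exact integrableOn_const (isCompact_Icc.prod isCompact_Icc).measure_lt_top.ne
    · exact ((hΦmeas F hFm).aestronglyMeasurable).restrict
    · rw [ae_restrict_iff' ((measurableSet_Ioi).prod measurableSet_Ioo)]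
      apply Filter.Eventually.of_forall
      rintro ⟨r, θ⟩ ⟨hr, hθ⟩
      simp only [Set.mem_Ioi] at hr
      by_cases hmem : s12e.symm (polarCoord.symm (r, θ)) ∈ A
      · have hrad : rad2 (s12e.symm (polarCoord.symm (r, θ))) = r := by
          rw [s12_vec]
          exact s12_rad2_smul r hr.le _ (s12_unit θ)
        have hrT : tbar ≤ r ∧ r ≤ T := by
          have := hmem
          rw [hAdef] at this
          simp only [Set.mem_setOf_eq, hrad] at this
          exact this
        have hin : (r, θ) ∈ Set.Icc tbar T ×ˢ Set.Icc (-π) π :=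
          ⟨⟨hrT.1, hrT.2⟩, ⟨hθ.1.le, hθ.2.le⟩⟩
        rw [Set.indicator_of_mem hin, Set.indicator_of_mem hmem]
        have : ‖r * F (s12e.symm (polarCoord.symm (r, θ)))‖
            = r * |F (s12e.symm (polarCoord.symm (r, θ)))| := by
          rw [norm_mul, Real.norm_eq_abs, Real.norm_eq_abs, abs_of_pos hr]
        rw [this]
        exact mul_le_mul hrT.2 (hFb _ hmem) (abs_nonneg _) hT0.le
      · rw [Set.indicator_of_notMem hmem]
        simp only [mul_zero, norm_zero]
        exact Set.indicator_nonneg (fun _ _ => mul_nonneg hT0.le hC0nonneg) _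
  -- collapsing the radial integral
  have hcollapse : ∀ (F : (Fin 2 → ℝ) → ℝ) (θ : ℝ),
      (∫ r in Set.Ioi (0:ℝ), ((fun p : ℝ × ℝ =>
          p.1 * A.indicator F (s12e.symm (polarCoord.symm p))) (r, θ)))
        = ∫ r in tbar..T, r * F (r • ![Real.cos θ, Real.sin θ]) := by
    intro F θ
    set ω : Fin 2 → ℝ := ![Real.cos θ, Real.sin θ] with hωdef
    have hEq : Set.EqOn (fun r : ℝ => ((fun p : ℝ × ℝ =>
        p.1 * A.indicator F (s12e.symm (polarCoord.symm p))) (r, θ)))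
        (fun r : ℝ => (Set.Icc tbar T).indicator (fun r => r * F (r • ω)) r)
        (Set.Ioi 0) := by
      intro r hr
      simp only [Set.mem_Ioi] at hr
      have hy : s12e.symm (polarCoord.symm (r, θ)) = r • ω := s12_vec r θ
      have hrad : rad2 (r • ω) = r := s12_rad2_smul r hr.le ω (s12_unit θ)
      by_cases hmem : r ∈ Set.Icc tbar T
      · have hA : r • ω ∈ A := by
          rw [hAdef]
          simp only [Set.mem_setOf_eq, hrad]
          exact ⟨hmem.1, hmem.2⟩
        simp only [hy, Set.indicator_of_mem hA, Set.indicator_of_mem hmem]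
      · have hA : r • ω ∉ A := by
          intro h
          rw [hAdef] at h
          simp only [Set.mem_setOf_eq, hrad] at h
          exact hmem ⟨h.1, h.2⟩
        simp only [hy, Set.indicator_of_notMem hA, Set.indicator_of_notMem hmem, mul_zero]
    rw [MeasureTheory.setIntegral_congr_fun measurableSet_Ioi hEq]
    rw [MeasureTheory.setIntegral_indicator measurableSet_Icc]
    have hinter : Set.Ioi (0:ℝ) ∩ Set.Icc tbar T = Set.Icc tbar T := by
      apply Set.inter_eq_right.mpr
      intro r hr
      simp only [Set.mem_Ioi]
      have := hr.1
      linarith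
    rw [hinter, MeasureTheory.integral_Icc_eq_integral_Ioc,
      ← intervalIntegral.integral_of_le htb2]
  -- the target as a product set
  have htarget : polarCoord.target = Set.Ioi (0:ℝ) ×ˢ Set.Ioo (-π) π := rfl
  -- bounds on the supremum
  have hMbdd : BddAbove (Set.range fun ω : {ω : Fin 2 → ℝ // rad2 ω = 1} =>
      |f (mkPt t (T • (ω : Fin 2 → ℝ)))|) := by
    set g : (Fin 2 → ℝ) → ℝ := fun ω => |f (mkPt t (T • ω))| with hgdef
    have hgc : Continuous g := by
      apply Continuous.abs
      exact hf.continuous.comp ((s12_mk_cont t).comp (continuous_const_smul T))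
    have hScl : IsClosed {ω : Fin 2 → ℝ | rad2 ω = 1} :=
      isClosed_eq s12_rad2_cont continuous_const
    have hScomp : IsCompact {ω : Fin 2 → ℝ | rad2 ω = 1} := by
      apply Metric.isCompact_of_isClosed_isBounded hScl
      rw [isBounded_iff_forall_norm_le]
      refine ⟨1, fun ω hω => ?_⟩
      rw [pi_norm_le_iff_of_nonneg zero_le_one]
      intro i
      calc ‖ω i‖ = |ω i| := rfl
      _ ≤ rad2 ω := hradle ω i
      _ = 1 := hω
    have : (Set.range fun ω : {ω : Fin 2 → ℝ // rad2 ω = 1} =>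
        |f (mkPt t (T • (ω : Fin 2 → ℝ)))|) = g '' {ω : Fin 2 → ℝ | rad2 ω = 1} := by
      rw [show (fun ω : {ω : Fin 2 → ℝ // rad2 ω = 1} => |f (mkPt t (T • (ω : Fin 2 → ℝ)))|)
        = g ∘ (Subtype.val) from rfl, Set.range_comp, Subtype.range_coe_subtype]
    rw [this]
    exact (hScomp.image hgc).bddAbove
  have hMle : ∀ ω : Fin 2 → ℝ, rad2 ω = 1 → |f (mkPt t (T • ω))| ≤ M := by
    intro ω hω
    exact le_ciSup hMbdd (⟨ω, hω⟩ : {ω : Fin 2 → ℝ // rad2 ω = 1})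
  have hM0 : 0 ≤ M := by
    have h1 : rad2 ![(1:ℝ), 0] = 1 := by
      simp [rad2]
    exact le_trans (abs_nonneg _) (hMle ![(1:ℝ), 0] h1)
  -- the per-angle estimate
  have hangle : ∀ θ : ℝ,
      (∫ r in tbar..T, r * F1 (r • ![Real.cos θ, Real.sin θ]))
        ≤ 2 * t * M^2 + 4 * ∫ r in tbar..T, r * F2 (r • ![Real.cos θ, Real.sin θ]) := by
    intro θ
    set ω : Fin 2 → ℝ := ![Real.cos θ, Real.sin θ] with hωdef
    have hωu : rad2 ω = 1 := s12_unit θ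
    set h : ℝ → ℝ := fun r => f (mkPt t (r • ω)) with hhdef
    set h' : ℝ → ℝ := fun r => fderiv ℝ f (mkPt t (r • ω)) (Fin.cons 0 ω) with hh'def
    have hd : ∀ r, HasDerivAt h (h' r) r := fun r => s12_hasDeriv f hf t ω r
    have hccurve : Continuous (fun r : ℝ => mkPt t (r • ω)) :=
      (s12_mk_cont t).comp (continuous_id.smul continuous_const)
    have hch : Continuous h := hf.continuous.comp hccurve
    have hch' : Continuous h' :=
      ((hf.continuous_fderiv (by simp)).comp hccurve).clm_apply continuous_const
    have heq1 : Set.EqOn (fun r : ℝ => r * F1 (r • ω))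
        (fun r : ℝ => r * (h r)^2 / (1+t-r)^2) (Set.uIcc tbar T) := by
      intro r hr
      rw [Set.uIcc_of_le htb2] at hr
      have hr0 : (0:ℝ) ≤ r := by linarith [hr.1]
      have hrad : rad2 (r • ω) = r := s12_rad2_smul r hr0 ω hωu
      simp only [hF1def, hrad, hhdef]
      ring
    have heq2 : ∀ r ∈ Set.uIcc tbar T, r * (h' r)^2 ≤ r * F2 (r • ω) := by
      intro r hr
      rw [Set.uIcc_of_le htb2] at hr
      have hr0 : (0:ℝ) ≤ r := by linarith [hr.1]
      apply mul_le_mul_of_nonneg_left _ hr0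
      exact s12_deriv_sq_le f ω hωu (mkPt t (r • ω))
    have hHardy := s12_hardy1d t T tbar htb1 htb2 htT h h' hd hch hch'
    have hstep1 : (∫ r in tbar..T, r * F1 (r • ω)) = ∫ r in tbar..T, r * (h r)^2 / (1+t-r)^2 :=
      intervalIntegral.integral_congr heq1
    have hbd : 2 * (T * (h T)^2 / (1+t-T)) ≤ 2 * t * M^2 := by
      have hhT : |h T| ≤ M := hMle ω hωu
      have h2 : (h T)^2 ≤ M^2 := by
        have := abs_le.mp hhT
        nlinarith
      have h3 : (1:ℝ) ≤ 1 + t - T := by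
        simp only [hTdef]
        linarith
      have h4 : T * (h T)^2 / (1+t-T) ≤ T * (h T)^2 := by
        apply div_le_self (by positivity) h3
      have h5 : T * (h T)^2 ≤ t * M^2 := by
        apply mul_le_mul _ h2 (sq_nonneg _) ht0.le
        simp only [hTdef]; linarith
      nlinarith [h4, h5]
    have hmono : (∫ r in tbar..T, r * (h' r)^2) ≤ ∫ r in tbar..T, r * F2 (r • ω) := by
      apply intervalIntegral.integral_mono_on htb2
      · exact (continuousOn_id.mul ((hch'.continuousOn).pow 2)).intervalIntegrable
      · apply ContinuousOn.intervalIntegrable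
        exact continuousOn_id.mul ((hF2cont.comp
          (continuous_id.smul continuous_const)).continuousOn)
      · intro r hr
        exact heq2 r (by rw [Set.uIcc_of_le htb2]; exact hr)
    rw [hstep1]
    calc (∫ r in tbar..T, r * (h r)^2 / (1+t-r)^2)
        ≤ 2 * (T * (h T)^2 / (1+t-T)) + 4 * ∫ r in tbar..T, r * (h' r)^2 := hHardy
      _ ≤ 2 * t * M^2 + 4 * ∫ r in tbar..T, r * F2 (r • ω) := by linarith
  -- assembling via Fubini
  have hint1 := hIntOn F1 hF1meas hbF1
  have hint2 := hIntOn F2 hF2meas hbF2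
  have hfub1 : (∫ y in A, F1 y) = ∫ θ in Set.Ioo (-π) π, ∫ r in Set.Ioi (0:ℝ), Φ1 (r, θ) := by
    rw [s12_polar F1 A hAmeas, htarget]
    exact s12_prod_symm Φ1 _ _ hint1
  have hfub2 : (∫ y in A, F2 y) = ∫ θ in Set.Ioo (-π) π, ∫ r in Set.Ioi (0:ℝ), Φ2 (r, θ) := by
    rw [s12_polar F2 A hAmeas, htarget]
    exact s12_prod_symm Φ2 _ _ hint2
  have hIint1 : IntegrableOn (fun θ => ∫ r in Set.Ioi (0:ℝ), Φ1 (r, θ))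
      (Set.Ioo (-π) π) volume := by
    have := hint1
    rw [IntegrableOn, Measure.volume_eq_prod, ← Measure.prod_restrict] at this
    exact this.integral_prod_right
  have hIint2 : IntegrableOn (fun θ => ∫ r in Set.Ioi (0:ℝ), Φ2 (r, θ))
      (Set.Ioo (-π) π) volume := by
    have := hint2
    rw [IntegrableOn, Measure.volume_eq_prod, ← Measure.prod_restrict] at this
    exact this.integral_prod_right
  have hmono2 : (∫ θ in Set.Ioo (-π) π, ∫ r in Set.Ioi (0:ℝ), Φ1 (r, θ))
      ≤ ∫ θ in Set.Ioo (-π) π,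
          (2 * t * M^2 + 4 * ∫ r in Set.Ioi (0:ℝ), Φ2 (r, θ)) := by
    apply MeasureTheory.setIntegral_mono_on hIint1 _ measurableSet_Ioo
    · intro θ _
      rw [hcollapse F1 θ, hcollapse F2 θ]
      exact hangle θ
    · apply Integrable.add (integrableOn_const (by simp))
      exact hIint2.const_mul 4
  have hconst : (∫ θ in Set.Ioo (-π) π,
      (2 * t * M^2 + 4 * ∫ r in Set.Ioi (0:ℝ), Φ2 (r, θ)))
      = 4 * π * t * M^2 + 4 * ∫ y in A, F2 y := by
    rw [MeasureTheory.integral_add ((integrableOn_const (s := Set.Ioo (-π) π) (μ := volume)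
      (C := 2 * t * M^2) (by simp)) : Integrable (fun _ : ℝ => 2 * t * M^2)
        (volume.restrict (Set.Ioo (-π) π)))
      (hIint2.const_mul 4)]
    rw [MeasureTheory.integral_const_mul (4:ℝ), MeasureTheory.setIntegral_const]
    rw [measureReal_def, Real.volume_Ioo]
    rw [ENNReal.toReal_ofReal (by linarith [Real.pi_pos])]
    rw [← hfub2]
    rw [smul_eq_mul]
    ring
  have hkey : (∫ y in A, F1 y) ≤ 4 * π * t * M^2 + 4 * ∫ y in A, F2 y := by
    rw [hfub1]
    calc (∫ θ in Set.Ioo (-π) π, ∫ r in Set.Ioi (0:ℝ), Φ1 (r, θ))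
        ≤ ∫ θ in Set.Ioo (-π) π,
            (2 * t * M^2 + 4 * ∫ r in Set.Ioi (0:ℝ), Φ2 (r, θ)) := hmono2
      _ = 4 * π * t * M^2 + 4 * ∫ y in A, F2 y := hconst
  -- final square-root algebra
  set S1 : ℝ := ∫ y in A, F1 y with hS1def
  set S2 : ℝ := ∫ y in A, F2 y with hS2def
  have hS2nonneg : 0 ≤ S2 := by
    apply MeasureTheory.setIntegral_nonneg hAmeas
    intro y _
    simp only [hF2def]
    apply Finset.sum_nonneg
    intro α _
    exact sq_nonneg _
  have hsq1 : S1 ≤ (2*Real.sqrt π*(Real.sqrt t*M) + 2*Real.sqrt S2)^2 := by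
    have e1 : (Real.sqrt π)^2 = π := Real.sq_sqrt Real.pi_pos.le
    have e2 : (Real.sqrt t)^2 = t := Real.sq_sqrt ht0.le
    have e3 : (Real.sqrt S2)^2 = S2 := Real.sq_sqrt hS2nonneg
    have hcross : 0 ≤ (2*Real.sqrt π*(Real.sqrt t*M)) * (2*Real.sqrt S2) := by
      apply mul_nonneg _ (by positivity)
      apply mul_nonneg (by positivity)
      exact mul_nonneg (Real.sqrt_nonneg t) hM0
    have ea : (2*Real.sqrt π*(Real.sqrt t*M))^2 = 4*(π*(t*M^2)) := by
      rw [show (2*Real.sqrt π*(Real.sqrt t*M))^2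
        = 4*((Real.sqrt π)^2*((Real.sqrt t)^2*M^2)) from by ring, e1, e2]
    have eb : (2*Real.sqrt S2)^2 = 4*S2 := by
      rw [show (2*Real.sqrt S2)^2 = 4*(Real.sqrt S2)^2 from by ring, e3]
    nlinarith [hkey, hcross, ea, eb]
  have hsum0 : 0 ≤ 2*Real.sqrt π*(Real.sqrt t*M) + 2*Real.sqrt S2 := by
    apply add_nonneg _ (by positivity)
    apply mul_nonneg (by positivity)
    exact mul_nonneg (Real.sqrt_nonneg t) hM0
  have hsq2 : Real.sqrt S1 ≤ 2*Real.sqrt π*(Real.sqrt t*M) + 2*Real.sqrt S2 := by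
    calc Real.sqrt S1 ≤ Real.sqrt ((2*Real.sqrt π*(Real.sqrt t*M) + 2*Real.sqrt S2)^2) :=
          Real.sqrt_le_sqrt hsq1
      _ = 2*Real.sqrt π*(Real.sqrt t*M) + 2*Real.sqrt S2 := Real.sqrt_sq hsum0
  have hπ2 : Real.sqrt π ≤ 2 := by
    rw [show (2:ℝ) = Real.sqrt 4 by
      rw [show (4:ℝ) = 2^2 by norm_num, Real.sqrt_sq (by norm_num)]]
    exact Real.sqrt_le_sqrt Real.pi_le_four
  have hrpow : t ^ ((1:ℝ)/2) = Real.sqrt t := (Real.sqrt_eq_rpow t).symm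
  rw [hrpow]
  have h2 : 2*Real.sqrt π*(Real.sqrt t*M) ≤ 4 * (Real.sqrt t * M) := by
    have h3 : 0 ≤ Real.sqrt t * M := mul_nonneg (Real.sqrt_nonneg t) hM0
    nlinarith
  have h4 : 2*Real.sqrt S2 ≤ 4*Real.sqrt S2 := by
    have := Real.sqrt_nonneg S2
    linarith
  calc Real.sqrt S1 ≤ 2*Real.sqrt π*(Real.sqrt t*M) + 2*Real.sqrt S2 := hsq2
    _ ≤ 4 * (Real.sqrt t * M) + 4*Real.sqrt S2 := by linarith
    _ = 4 * (Real.sqrt t * M + Real.sqrt S2) := by ring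


end
end
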